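/- arXiv:math-ph/0512033 — 11 statements merged into one kernel-verified Lean document; each statement's English description precedes it below -/
import Mathlib

section
/- Let A(x) ∈ M(r,d) and c ∈ ℂ be such that det D(A(x); c) ≠ 0. Then there exists g(x) ∈ G_r such that the conjugate B(x) = g(x)⁻¹A(x)g(x), written in block form B(x) = [[v_B(x), ᵗw_B(x)],[u_B(x), T_B(x)]], satisfies: u_B(c) = ν, T_B(c) = τ, and the first row of the coefficient of (x−c)¹ in the expansion of T_B(x) in powers of (x−c) is zero. -/
open Polynomial Matrix

noncomputable section

/-- The space `M(r,d)` of polynomial matrices, with `r = n+2`. -/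
def Mrd (n d : ℕ) (A : Matrix (Fin (n+2)) (Fin (n+2)) (Polynomial ℂ)) : Prop :=
  (A 0 0).degree ≤ (d : WithBot ℕ) ∧
  (∀ j : Fin (n+1), (A 0 j.succ).degree ≤ ((d+1 : ℕ) : WithBot ℕ)) ∧
  (∀ i : Fin (n+1), (A i.succ 0).degree ≤ ((d-1 : ℕ) : WithBot ℕ)) ∧
  (∀ i j : Fin (n+1), (A i.succ j.succ).degree ≤ (d : WithBot ℕ))

/-- The group `G_r`, `r = n+2`: block form `[[1, ᵗb₁x + ᵗb₀],[0, B]]` with `B ∈ GL_{r-1}(ℂ)`. -/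
def Gr (n : ℕ) (g : Matrix (Fin (n+2)) (Fin (n+2)) (Polynomial ℂ)) : Prop :=
  g 0 0 = 1 ∧
  (∀ i : Fin (n+1), g i.succ 0 = 0) ∧
  (∀ j : Fin (n+1), (g 0 j.succ).degree ≤ 1) ∧
  (∀ i j : Fin (n+1), (g i.succ j.succ).degree ≤ 0) ∧
  IsUnit g.det

/-- The block `u(x)` of `A(x)`. -/
def blkU (n : ℕ) (A : Matrix (Fin (n+2)) (Fin (n+2)) (Polynomial ℂ)) :
    Fin (n+1) → Polynomial ℂ := fun i => A i.succ 0

/-- The block `T(x)` of `A(x)`. -/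
def blkT (n : ℕ) (A : Matrix (Fin (n+2)) (Fin (n+2)) (Polynomial ℂ)) :
    Matrix (Fin (n+1)) (Fin (n+1)) (Polynomial ℂ) := Matrix.of fun i j => A i.succ j.succ

/-- `D(A(x); x) = (u(x), T(x)u(x), …, T(x)^{r−2}u(x))`. -/
def Dmat (n : ℕ) (A : Matrix (Fin (n+2)) (Fin (n+2)) (Polynomial ℂ)) :
    Matrix (Fin (n+1)) (Fin (n+1)) (Polynomial ℂ) :=
  Matrix.of fun i j => ((blkT n A ^ (j : ℕ)) *ᵥ blkU n A) i

/-- `D(A(x); c)`, evaluation at `x = c`. -/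
def Dc (n : ℕ) (A : Matrix (Fin (n+2)) (Fin (n+2)) (Polynomial ℂ)) (c : ℂ) :
    Matrix (Fin (n+1)) (Fin (n+1)) ℂ :=
  (Dmat n A).map (eval c)

/-- The lower shift matrix `τ`. -/
def tauMat (n : ℕ) : Matrix (Fin (n+1)) (Fin (n+1)) ℂ :=
  Matrix.of fun i j => if (i : ℕ) = (j : ℕ) + 1 then 1 else 0

/-- The vector `ν = ᵗ(1,0,…,0)`. -/
def nuVec (n : ℕ) : Fin (n+1) → ℂ := fun i => if (i : ℕ) = 0 then 1 else 0

namespace Stmt0Aux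

lemma sum_mulVec {m k : Type*} [Fintype k] {ι : Type*} (s : Finset ι)
    (M : ι → Matrix m k ℂ) (v : k → ℂ) :
    (∑ i ∈ s, M i) *ᵥ v = ∑ i ∈ s, (M i) *ᵥ v := by
  funext j
  simp only [Matrix.mulVec, dotProduct, Matrix.sum_apply, Finset.sum_mul,
    Finset.sum_apply]
  rw [Finset.sum_comm]

variable (n : ℕ) (A : Matrix (Fin (n+2)) (Fin (n+2)) (Polynomial ℂ)) (c : ℂ)

/-- evaluated `T`-block -/
def Tc : Matrix (Fin (n+1)) (Fin (n+1)) ℂ := (blkT n A).map (eval c)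

/-- evaluated `u`-block -/
def uc : Fin (n+1) → ℂ := fun i => eval c (blkU n A i)

lemma Dc_eq : Dc n A c = Matrix.of fun i j : Fin (n+1) => ((Tc n A c ^ (j : ℕ)) *ᵥ uc n A c) i := by
  ext i j
  have hpow : (Tc n A c) ^ (j : ℕ) = ((blkT n A) ^ (j : ℕ)).map (eval c) := by
    have : Tc n A c = (evalRingHom c).mapMatrix (blkT n A) := rfl
    rw [this, ← map_pow]
    rfl
  simp only [Dc, Dmat, Matrix.map_apply, Matrix.of_apply, hpow, Matrix.mulVec,
    dotProduct, eval_finset_sum, eval_mul]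
  simp [uc, blkU]

def a : Fin (n+1) → ℂ := (Dc n A c)⁻¹ *ᵥ ((Tc n A c ^ (n+1)) *ᵥ uc n A c)

def γ' : ℕ → ℂ := fun k => if h : k ≤ n then a n A c ⟨n - k, by omega⟩ else 0

/-- the Horner-type polynomials -/
def p : ℕ → Polynomial ℂ := fun k =>
  X ^ k - ∑ i ∈ Finset.range k, C (γ' n A c i) * X ^ (k - 1 - i)

lemma p_zero : p n A c 0 = 1 := by simp [p]

lemma p_succ (k : ℕ) : p n A c (k+1) = X * p n A c k - C (γ' n A c k) := by
  unfold p
  rw [mul_sub, Finset.mul_sum, Finset.sum_range_succ]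
  have h1 : ∀ i ∈ Finset.range k,
      X * (C (γ' n A c i) * X ^ (k - 1 - i)) = C (γ' n A c i) * X ^ (k + 1 - 1 - i) := by
    intro i hi
    simp only [Finset.mem_range] at hi
    rw [mul_left_comm, ← pow_succ']
    congr 2
    omega
  rw [Finset.sum_congr rfl h1]
  have h2 : k + 1 - 1 - k = 0 := by omega
  rw [h2, pow_zero, mul_one, ← pow_succ']
  ring

lemma p_coeff_self (k : ℕ) : (p n A c k).coeff k = 1 := by
  simp only [p, coeff_sub, coeff_X_pow, if_pos rfl, finset_sum_coeff, coeff_C_mul]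
  have hs : ∀ i ∈ Finset.range k, γ' n A c i * (if k = k - 1 - i then (1:ℂ) else 0) = 0 := by
    intro i hi
    simp only [Finset.mem_range] at hi
    rw [if_neg (by omega), mul_zero]
  rw [Finset.sum_congr rfl hs]
  simp

lemma p_coeff_zero (k m : ℕ) (h : k < m) : (p n A c k).coeff m = 0 := by
  simp only [p, coeff_sub, coeff_X_pow, finset_sum_coeff, coeff_C_mul]
  rw [if_neg (by omega)]
  have hs : ∀ i ∈ Finset.range k, γ' n A c i * (if m = k - 1 - i then (1:ℂ) else 0) = 0 := by
    intro i hi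
    simp only [Finset.mem_range] at hi
    rw [if_neg (by omega), mul_zero]
  rw [Finset.sum_congr rfl hs]
  simp

lemma p_natDegree_le (k : ℕ) : (p n A c k).natDegree ≤ k :=
  natDegree_le_iff_coeff_eq_zero.mpr fun m hm => p_coeff_zero n A c k m hm

/-- the new basis vectors -/
def F : ℕ → Fin (n+1) → ℂ := fun k => (aeval (Tc n A c) (p n A c k)) *ᵥ uc n A c

lemma F_zero : F n A c 0 = uc n A c := by
  simp [F, p_zero, Matrix.one_mulVec]

lemma F_succ (k : ℕ) :
    Tc n A c *ᵥ F n A c k = F n A c (k+1) + γ' n A c k • uc n A c := by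
  unfold F
  rw [Matrix.mulVec_mulVec]
  have : Tc n A c * (aeval (Tc n A c)) (p n A c k) = aeval (Tc n A c) (X * p n A c k) := by
    rw [_root_.map_mul, aeval_X]
  rw [this]
  have h2 : X * p n A c k = p n A c (k+1) + C (γ' n A c k) := by
    rw [p_succ]; ring
  rw [h2, map_add, Matrix.add_mulVec, aeval_C]
  congr 1
  rw [Algebra.algebraMap_eq_smul_one, Matrix.smul_mulVec, Matrix.one_mulVec]


lemma hDcUnit (hD : (Dc n A c).det ≠ 0) : IsUnit (Dc n A c).det :=
  isUnit_iff_ne_zero.mpr hD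

lemma Dc_col (j : Fin (n+1)) (i : Fin (n+1)) :
    Dc n A c i j = ((Tc n A c ^ (j : ℕ)) *ᵥ uc n A c) i := by
  rw [Dc_eq]; rfl

lemma hrel (hD : (Dc n A c).det ≠ 0) :
    (Tc n A c ^ (n+1)) *ᵥ uc n A c =
      ∑ j : Fin (n+1), a n A c j • ((Tc n A c ^ (j : ℕ)) *ᵥ uc n A c) := by
  have h1 : Dc n A c *ᵥ a n A c = (Tc n A c ^ (n+1)) *ᵥ uc n A c := by
    unfold a
    rw [Matrix.mulVec_mulVec, Matrix.mul_nonsing_inv _ (hDcUnit n A c hD), Matrix.one_mulVec]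
  rw [← h1]
  funext i
  rw [Matrix.mulVec, dotProduct, Finset.sum_apply]
  refine Finset.sum_congr rfl fun j _ => ?_
  rw [Dc_col]
  simp [mul_comm]

lemma F_top (hD : (Dc n A c).det ≠ 0) : F n A c (n+1) = 0 := by
  unfold F
  have hp : p n A c (n+1) =
      X ^ (n+1) - ∑ i ∈ Finset.range (n+1), C (γ' n A c i) * X ^ (n - i) := by
    unfold p
    congr 1
  rw [hp, map_sub, map_sum, Matrix.sub_mulVec, aeval_X_pow]
  have h2 : ∀ i, (aeval (Tc n A c)) (C (γ' n A c i) * X ^ (n - i)) =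
      γ' n A c i • (Tc n A c ^ (n - i)) := by
    intro i
    rw [_root_.map_mul, aeval_C, aeval_X_pow, Algebra.algebraMap_eq_smul_one, smul_mul_assoc,
      one_mul]
  simp only [h2]
  rw [sum_mulVec]
  simp only [Matrix.smul_mulVec]
  have h3 : ∑ i ∈ Finset.range (n+1), γ' n A c i • ((Tc n A c ^ (n - i)) *ᵥ uc n A c) =
      ∑ j : Fin (n+1), a n A c j • ((Tc n A c ^ (j : ℕ)) *ᵥ uc n A c) := by
    rw [← Fin.sum_univ_eq_sum_range (fun i => γ' n A c i • ((Tc n A c ^ (n - i)) *ᵥ uc n A c))]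
    refine Fintype.sum_equiv (Fin.revPerm) _ _ fun i => ?_
    have hrev : ((Fin.revPerm i : Fin (n+1)) : ℕ) = n - (i : ℕ) := by
      simp [Fin.val_rev]
    rw [hrev]
    congr 1
    unfold γ'
    rw [dif_pos (by omega)]
    congr 1
    ext
    simp [Fin.val_rev]
  rw [h3, ← hrel n A c hD, sub_self]

/-- the base-change matrix `B` -/
def Bm : Matrix (Fin (n+1)) (Fin (n+1)) ℂ := Matrix.of fun i j => F n A c (j : ℕ) i

/-- the triangular coefficient matrix -/
def U : Matrix (Fin (n+1)) (Fin (n+1)) ℂ := Matrix.of fun i j => (p n A c (j : ℕ)).coeff i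

lemma Bm_eq : Bm n A c = Dc n A c * U n A c := by
  ext i j
  rw [Matrix.mul_apply]
  have : ∀ k : Fin (n+1), Dc n A c i k * U n A c k j =
      ((p n A c (j : ℕ)).coeff (k : ℕ) • ((Tc n A c ^ (k : ℕ)) *ᵥ uc n A c)) i := by
    intro k
    rw [Dc_col]
    simp [U, mul_comm]
  rw [Finset.sum_congr rfl fun k _ => this k]
  have haev : F n A c (j : ℕ) = ∑ k ∈ Finset.range (n+1),
      (p n A c (j : ℕ)).coeff k • ((Tc n A c ^ k) *ᵥ uc n A c) := by
    unfold F
    rw [aeval_eq_sum_range' (n := n+1) (lt_of_le_of_lt (p_natDegree_le n A c j) (by omega)),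
      sum_mulVec]
    simp only [Matrix.smul_mulVec]
  have : Bm n A c i j = F n A c (j : ℕ) i := rfl
  rw [this, haev, ← Fin.sum_univ_eq_sum_range
    (fun k => (p n A c (j : ℕ)).coeff k • ((Tc n A c ^ k) *ᵥ uc n A c)) (n+1)]
  simp [Finset.sum_apply]

lemma U_det : (U n A c).det = 1 := by
  rw [Matrix.det_of_upperTriangular]
  · refine Finset.prod_eq_one fun i _ => ?_
    simp [U, p_coeff_self]
  · intro i j hij
    simp only [Function.id_def] at hij
    exact p_coeff_zero n A c j i (by exact_mod_cast hij)

lemma Bm_det (hD : (Dc n A c).det ≠ 0) : IsUnit (Bm n A c).det := by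
  rw [Bm_eq, Matrix.det_mul, U_det, mul_one]
  exact isUnit_iff_ne_zero.mpr hD

/-- the companion-type matrix -/
def Mγ : Matrix (Fin (n+1)) (Fin (n+1)) ℂ :=
  Matrix.of fun i j => (if (i : ℕ) = (j : ℕ) + 1 then 1 else 0) +
    (if (i : ℕ) = 0 then γ' n A c j else 0)

lemma shift_sum (v : ℕ → ℂ) (hv : v (n+1) = 0) (j : Fin (n+1)) :
    ∑ k : Fin (n+1), v k * (if (k : ℕ) = (j : ℕ) + 1 then 1 else 0) = v ((j : ℕ) + 1) := by
  by_cases h : (j : ℕ) + 1 < n + 1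
  · have : ∀ k : Fin (n+1), ((k : ℕ) = (j : ℕ) + 1) ↔ k = ⟨(j : ℕ) + 1, h⟩ := by
      intro k; rw [Fin.ext_iff]
    simp only [this]
    rw [Finset.sum_eq_single (⟨(j : ℕ) + 1, h⟩ : Fin (n+1))]
    · simp
    · intro b _ hb; rw [if_neg hb, mul_zero]
    · intro hb; exact absurd (Finset.mem_univ _) hb
  · have hj : (j : ℕ) = n := by omega
    rw [Finset.sum_eq_zero, hj, hv]
    intro k _
    rw [if_neg (by omega), mul_zero]

lemma TcBm (hD : (Dc n A c).det ≠ 0) :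
    Tc n A c * Bm n A c = Bm n A c * Mγ n A c := by
  ext i j
  have hL : (Tc n A c * Bm n A c) i j = (Tc n A c *ᵥ F n A c (j : ℕ)) i := by
    rw [Matrix.mul_apply, Matrix.mulVec, dotProduct]
    rfl
  rw [hL, F_succ]
  have hR : (Bm n A c * Mγ n A c) i j =
      (∑ k : Fin (n+1), F n A c (k : ℕ) i * (if (k : ℕ) = (j : ℕ) + 1 then 1 else 0)) +
      γ' n A c j * F n A c 0 i := by
    rw [Matrix.mul_apply]
    simp only [Bm, Mγ, Matrix.of_apply, mul_add]
    rw [Finset.sum_add_distrib]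
    congr 1
    rw [Finset.sum_eq_single (0 : Fin (n+1))]
    · simp [mul_comm]
    · intro b _ hb
      rw [if_neg (show ¬ ((b : ℕ) = 0) from fun h => hb (Fin.ext h)), mul_zero]
    · intro hb; exact absurd (Finset.mem_univ _) hb
  rw [hR, shift_sum n (fun k => F n A c k i) (by show F n A c (n+1) i = 0; rw [F_top n A c hD]; rfl) j, F_zero]
  simp [mul_comm]

lemma BinvBm (hD : (Dc n A c).det ≠ 0) : (Bm n A c)⁻¹ * Bm n A c = 1 :=
  Matrix.nonsing_inv_mul _ (Bm_det n A c hD)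

lemma conj_eq (hD : (Dc n A c).det ≠ 0) :
    (Bm n A c)⁻¹ * Tc n A c * Bm n A c = Mγ n A c := by
  rw [Matrix.mul_assoc, TcBm n A c hD, ← Matrix.mul_assoc, BinvBm n A c hD, Matrix.one_mul]

lemma Binv_uc (hD : (Dc n A c).det ≠ 0) :
    (Bm n A c)⁻¹ *ᵥ uc n A c = nuVec n := by
  have h1 : Bm n A c *ᵥ nuVec n = uc n A c := by
    funext i
    rw [Matrix.mulVec, dotProduct, Finset.sum_eq_single (0 : Fin (n+1))]
    · simp [Bm, nuVec, ← F_zero n A c]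
    · intro b _ hb
      simp only [nuVec]
      rw [if_neg (show ¬ ((b : ℕ) = 0) from fun h => hb (Fin.ext h)), mul_zero]
    · intro hb; exact absurd (Finset.mem_univ _) hb
  rw [← h1, Matrix.mulVec_mulVec, BinvBm n A c hD, Matrix.one_mulVec]


/-- inverse of base change -/
def Binv : Matrix (Fin (n+1)) (Fin (n+1)) ℂ := (Bm n A c)⁻¹

def du : Fin (n+1) → ℂ := fun k => eval c (derivative (A k.succ 0))

def dT : Matrix (Fin (n+1)) (Fin (n+1)) ℂ :=
  Matrix.of fun k l => eval c (derivative (A k.succ l.succ))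

def sS : ℂ := (Binv n A c *ᵥ du n A c) 0

def W : Matrix (Fin (n+1)) (Fin (n+1)) ℂ := Binv n A c * dT n A c * Bm n A c

def b1 : Fin (n+1) → ℂ := fun j => sS n A c * γ' n A c j - W n A c 0 j

def b0 : Fin (n+1) → ℂ := fun j => -γ' n A c j - b1 n A c j * c

def bpoly : Fin (n+1) → Polynomial ℂ := fun j => C (b0 n A c j) + C (b1 n A c j) * X

lemma bc_eval (j : Fin (n+1)) : eval c (bpoly n A c j) = -γ' n A c j := by
  simp [bpoly, b0]

lemma bc_deriv (j : Fin (n+1)) :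
    eval c (derivative (bpoly n A c j)) = b1 n A c j := by
  simp [bpoly]

/-- the matrix `g(x)` -/
def gM : Matrix (Fin (n+2)) (Fin (n+2)) (Polynomial ℂ) :=
  Matrix.of fun i j =>
    Fin.cases (Fin.cases 1 (fun j' => bpoly n A c j') j)
      (fun i' => Fin.cases 0 (fun j' => C (Bm n A c i' j')) j) i

/-- the matrix `g(x)⁻¹` -/
def hM : Matrix (Fin (n+2)) (Fin (n+2)) (Polynomial ℂ) :=
  Matrix.of fun i j =>
    Fin.cases
      (Fin.cases 1 (fun j' => -∑ k : Fin (n+1), bpoly n A c k * C (Binv n A c k j')) j)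
      (fun i' => Fin.cases 0 (fun j' => C (Binv n A c i' j')) j) i

lemma g00 : gM n A c 0 0 = 1 := by simp [gM]
lemma g0s (j : Fin (n+1)) : gM n A c 0 j.succ = bpoly n A c j := by simp [gM]
lemma gs0 (i : Fin (n+1)) : gM n A c i.succ 0 = 0 := by simp [gM]
lemma gss (i j : Fin (n+1)) : gM n A c i.succ j.succ = C (Bm n A c i j) := by simp [gM]
lemma h00 : hM n A c 0 0 = 1 := by simp [hM]
lemma h0s (j : Fin (n+1)) :
    hM n A c 0 j.succ = -∑ k : Fin (n+1), bpoly n A c k * C (Binv n A c k j) := by simp [hM]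
lemma hs0 (i : Fin (n+1)) : hM n A c i.succ 0 = 0 := by simp [hM]
lemma hss (i j : Fin (n+1)) : hM n A c i.succ j.succ = C (Binv n A c i j) := by simp [hM]

lemma hg (hD : (Dc n A c).det ≠ 0) : hM n A c * gM n A c = 1 := by
  have hBB : ∀ l j' : Fin (n+1), ∑ k : Fin (n+1), Binv n A c l k * Bm n A c k j'
      = if l = j' then 1 else 0 := by
    intro l j'
    rw [← Matrix.mul_apply]
    show ((Bm n A c)⁻¹ * Bm n A c) l j' = _
    rw [BinvBm n A c hD, Matrix.one_apply]
  ext i j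
  refine Fin.cases ?_ (fun i' => ?_) i <;> refine Fin.cases ?_ (fun j' => ?_) j
  · rw [Matrix.mul_apply, Fin.sum_univ_succ]
    simp [g00, gs0, h00, Matrix.one_apply]
  · have key : ∑ k : Fin (n+1),
        (∑ l : Fin (n+1), bpoly n A c l * C (Binv n A c l k)) * C (Bm n A c k j')
        = bpoly n A c j' := by
      calc ∑ k : Fin (n+1),
            (∑ l : Fin (n+1), bpoly n A c l * C (Binv n A c l k)) * C (Bm n A c k j')
          = ∑ k : Fin (n+1), ∑ l : Fin (n+1),
              bpoly n A c l * (C (Binv n A c l k) * C (Bm n A c k j')) := by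
            refine Finset.sum_congr rfl fun k _ => ?_
            rw [Finset.sum_mul]
            exact Finset.sum_congr rfl fun l _ => by ring
        _ = ∑ l : Fin (n+1), ∑ k : Fin (n+1),
              bpoly n A c l * (C (Binv n A c l k) * C (Bm n A c k j')) := Finset.sum_comm
        _ = ∑ l : Fin (n+1), bpoly n A c l *
              C (∑ k : Fin (n+1), Binv n A c l k * Bm n A c k j') := by
            refine Finset.sum_congr rfl fun l _ => ?_
            rw [← Finset.mul_sum]
            congr 1
            rw [map_sum]
            exact Finset.sum_congr rfl fun k _ => (map_mul C _ _).symm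
        _ = ∑ l : Fin (n+1), bpoly n A c l * C (if l = j' then 1 else 0) := by
            simp only [hBB]
        _ = bpoly n A c j' := by
            rw [Finset.sum_eq_single j']
            · simp
            · intro b _ hb; simp [hb]
            · intro hb; exact absurd (Finset.mem_univ _) hb
    rw [Matrix.mul_apply, Fin.sum_univ_succ, Matrix.one_apply_ne (Ne.symm (Fin.succ_ne_zero j'))]
    simp only [h00, g0s, one_mul, h0s, gss, neg_mul]
    rw [Finset.sum_neg_distrib, key]
    ring
  · rw [Matrix.mul_apply, Fin.sum_univ_succ, Matrix.one_apply_ne (Fin.succ_ne_zero i')]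
    simp [hs0, gs0]
  · rw [Matrix.mul_apply, Fin.sum_univ_succ]
    simp only [hs0, zero_mul, hss, gss, g0s, zero_add]
    have hC : ∑ k : Fin (n+1), C (Binv n A c i' k) * C (Bm n A c k j')
        = C (if i' = j' then (1:ℂ) else 0) := by
      rw [← hBB i' j', map_sum]
      exact Finset.sum_congr rfl fun k _ => (map_mul C _ _).symm
    rw [hC, Matrix.one_apply, apply_ite C]
    simp [Fin.succ_inj]

lemma Ag0 (k : Fin (n+2)) : (A * gM n A c) k 0 = A k 0 := by
  rw [Matrix.mul_apply, Fin.sum_univ_succ]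
  simp [g00, gs0]

lemma AgS (k : Fin (n+2)) (j : Fin (n+1)) :
    (A * gM n A c) k j.succ
      = A k 0 * bpoly n A c j + ∑ l : Fin (n+1), A k l.succ * C (Bm n A c l j) := by
  rw [Matrix.mul_apply, Fin.sum_univ_succ]
  simp [g0s, gss]

lemma HAg_s0 (i : Fin (n+1)) :
    (hM n A c * A * gM n A c) i.succ 0
      = ∑ k : Fin (n+1), C (Binv n A c i k) * A k.succ 0 := by
  rw [Matrix.mul_assoc, Matrix.mul_apply, Fin.sum_univ_succ]
  simp only [hs0, zero_mul, zero_add, hss, Ag0]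

lemma HAg_ss (i j : Fin (n+1)) :
    (hM n A c * A * gM n A c) i.succ j.succ
      = ∑ k : Fin (n+1), C (Binv n A c i k) *
          (A k.succ 0 * bpoly n A c j + ∑ l : Fin (n+1), A k.succ l.succ * C (Bm n A c l j)) := by
  rw [Matrix.mul_assoc, Matrix.mul_apply, Fin.sum_univ_succ]
  simp only [hs0, zero_mul, zero_add, hss, AgS]

lemma evalU (hD : (Dc n A c).det ≠ 0) (i : Fin (n+1)) :
    eval c ((hM n A c * A * gM n A c) i.succ 0) = nuVec n i := by
  rw [HAg_s0, eval_finset_sum]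
  have : ∀ k : Fin (n+1), eval c (C (Binv n A c i k) * A k.succ 0)
      = Binv n A c i k * uc n A c k := by
    intro k; rw [eval_mul, eval_C]; rfl
  rw [Finset.sum_congr rfl fun k _ => this k, ← Binv_uc n A c hD]
  rfl

lemma evalT (hD : (Dc n A c).det ≠ 0) (i j : Fin (n+1)) :
    eval c ((hM n A c * A * gM n A c) i.succ j.succ) = tauMat n i j := by
  rw [HAg_ss, eval_finset_sum]
  have h1 : ∀ k : Fin (n+1),
      eval c (C (Binv n A c i k) *
        (A k.succ 0 * bpoly n A c j + ∑ l : Fin (n+1), A k.succ l.succ * C (Bm n A c l j)))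
      = Binv n A c i k * uc n A c k * (-γ' n A c j)
        + Binv n A c i k * (∑ l : Fin (n+1), Tc n A c k l * Bm n A c l j) := by
    intro k
    rw [eval_mul, eval_C, eval_add, eval_mul, bc_eval, eval_finset_sum]
    have : ∀ l : Fin (n+1), eval c (A k.succ l.succ * C (Bm n A c l j))
        = Tc n A c k l * Bm n A c l j := by
      intro l; rw [eval_mul, eval_C]; rfl
    rw [Finset.sum_congr rfl fun l _ => this l]
    show Binv n A c i k * (uc n A c k * (-γ' n A c ↑j) + _) = _
    ring
  rw [Finset.sum_congr rfl fun k _ => h1 k, Finset.sum_add_distrib]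
  have h2 : ∑ k : Fin (n+1), Binv n A c i k * uc n A c k * (-γ' n A c j)
      = nuVec n i * (-γ' n A c j) := by
    rw [← Finset.sum_mul, ← Binv_uc n A c hD]
    rfl
  have h3 : ∑ k : Fin (n+1), Binv n A c i k * (∑ l : Fin (n+1), Tc n A c k l * Bm n A c l j)
      = Mγ n A c i j := by
    have : ∀ k : Fin (n+1), (∑ l : Fin (n+1), Tc n A c k l * Bm n A c l j)
        = (Tc n A c * Bm n A c) k j := fun k => (Matrix.mul_apply).symm
    rw [Finset.sum_congr rfl fun k _ => by rw [this k]]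
    rw [← Matrix.mul_apply]
    show ((Bm n A c)⁻¹ * (Tc n A c * Bm n A c)) i j = _
    rw [← Matrix.mul_assoc, conj_eq n A c hD]
  rw [h2, h3]
  simp only [nuVec, Mγ, tauMat, Matrix.of_apply]
  split_ifs with hi0 hij hij <;> first | ring | omega

lemma evalD (hD : (Dc n A c).det ≠ 0) (j : Fin (n+1)) :
    eval c (derivative ((hM n A c * A * gM n A c) (0 : Fin (n+1)).succ j.succ)) = 0 := by
  rw [HAg_ss, derivative_sum, eval_finset_sum]
  have h1 : ∀ k : Fin (n+1),
      eval c (derivative (C (Binv n A c 0 k) *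
        (A k.succ 0 * bpoly n A c j + ∑ l : Fin (n+1), A k.succ l.succ * C (Bm n A c l j))))
      = Binv n A c 0 k * du n A c k * (-γ' n A c j)
        + Binv n A c 0 k * uc n A c k * b1 n A c j
        + Binv n A c 0 k * (∑ l : Fin (n+1), dT n A c k l * Bm n A c l j) := by
    intro k
    rw [derivative_mul, derivative_C, zero_mul, eval_add, eval_zero, eval_mul, eval_C]
    rw [derivative_add, derivative_mul, derivative_sum]
    rw [eval_add, eval_add, eval_mul, eval_mul, bc_eval, bc_deriv, eval_finset_sum]
    have : ∀ l : Fin (n+1), eval c (derivative (A k.succ l.succ * C (Bm n A c l j)))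
        = dT n A c k l * Bm n A c l j := by
      intro l
      rw [derivative_mul, derivative_C, mul_zero, add_zero, eval_mul, eval_C]
      rfl
    rw [Finset.sum_congr rfl fun l _ => this l, zero_add]
    show Binv n A c 0 k * (du n A c k * (-γ' n A c ↑j) + uc n A c k * b1 n A c ↑j + _) = _
    ring
  rw [Finset.sum_congr rfl fun k _ => h1 k, Finset.sum_add_distrib, Finset.sum_add_distrib]
  have h2 : ∑ k : Fin (n+1), Binv n A c 0 k * du n A c k * (-γ' n A c j)
      = sS n A c * (-γ' n A c j) := by
    rw [← Finset.sum_mul]; rfl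
  have h3 : ∑ k : Fin (n+1), Binv n A c 0 k * uc n A c k * b1 n A c j = b1 n A c j := by
    rw [← Finset.sum_mul]
    have : ∑ k : Fin (n+1), Binv n A c 0 k * uc n A c k = nuVec n 0 := by
      rw [← Binv_uc n A c hD]; rfl
    rw [this]
    simp [nuVec]
  have h4 : ∑ k : Fin (n+1), Binv n A c 0 k * (∑ l : Fin (n+1), dT n A c k l * Bm n A c l j)
      = W n A c 0 j := by
    have : ∀ k : Fin (n+1), (∑ l : Fin (n+1), dT n A c k l * Bm n A c l j)
        = (dT n A c * Bm n A c) k j := fun k => (Matrix.mul_apply).symm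
    rw [Finset.sum_congr rfl fun k _ => by rw [this k], ← Matrix.mul_apply]
    show (Binv n A c * (dT n A c * Bm n A c)) 0 j = _
    rw [← Matrix.mul_assoc]
    rfl
  rw [h2, h3, h4]
  simp only [b1]
  ring

end Stmt0Aux

/-- any `A(x) ∈ M(r,d)` with `det D(A(x); c) ≠ 0` can be brought into the
normal form at `c` by some `g(x) ∈ G_r`. -/
theorem stmt0 (n d : ℕ) (hd : 1 ≤ d)
    (A : Matrix (Fin (n+2)) (Fin (n+2)) (Polynomial ℂ)) (hA : Mrd n d A)
    (c : ℂ) (hD : (Dc n A c).det ≠ 0) :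
    ∃ g : Matrix (Fin (n+2)) (Fin (n+2)) (Polynomial ℂ), Gr n g ∧
      (∀ i : Fin (n+1), eval c (blkU n (g⁻¹ * A * g) i) = nuVec n i) ∧
      ((blkT n (g⁻¹ * A * g)).map (eval c) = tauMat n) ∧
      (∀ j : Fin (n+1), eval c (derivative (blkT n (g⁻¹ * A * g) 0 j)) = 0) := by
  have hginv : (Stmt0Aux.gM n A c)⁻¹ = Stmt0Aux.hM n A c :=
    Matrix.inv_eq_left_inv (Stmt0Aux.hg n A c hD)
  refine ⟨Stmt0Aux.gM n A c,
    ⟨Stmt0Aux.g00 n A c, Stmt0Aux.gs0 n A c, ?_, ?_, ?_⟩, ?_, ?_, ?_⟩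
  · intro j
    rw [Stmt0Aux.g0s]
    show (C (Stmt0Aux.b0 n A c j) + C (Stmt0Aux.b1 n A c j) * X).degree ≤ (1 : WithBot ℕ)
    rw [add_comm]
    exact degree_linear_le
  · intro i j
    rw [Stmt0Aux.gss]
    exact degree_C_le
  · have hdet : (Stmt0Aux.hM n A c).det * (Stmt0Aux.gM n A c).det = 1 := by
      rw [← Matrix.det_mul, Stmt0Aux.hg n A c hD, Matrix.det_one]
    exact IsUnit.of_mul_eq_one _ (by rw [mul_comm] at hdet; exact hdet)
  · intro i
    rw [hginv]
    exact Stmt0Aux.evalU n A c hD i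
  · rw [hginv]
    ext i j
    exact Stmt0Aux.evalT n A c hD i j
  · intro j
    rw [hginv]
    exact Stmt0Aux.evalD n A c hD j
end
end

section
/- Let A(x) ∈ M_r(ℂ[x]) and let g(x) = [[1, ᵗb₁x + ᵗb₀],[0, B]] ∈ G_r with B ∈ GL_{r−1}(ℂ). Then, as an identity of polynomials in ℂ[x], det D(g(x)⁻¹A(x)g(x); x) = (det B)⁻¹ · det D(A(x); x). -/
/-!
Write `A' = g⁻¹ A g`, `B` for the lower right block of `g` and `ᵗw` for the rest of its first
row. Comparing the lower blocks of `g A' = A g` gives `B u' = u` and `B T' = T B + u ᵗw`, so by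
induction `B T'^k u' = T^k u + ∑_{l<k} (ᵗw T'^{k-1-l} u') T^l u`. Hence
`B · D(A') = D(A) · P` with `P` upper unitriangular, and taking determinants
`det B · det D(A') = det D(A)`; finally `B` has constant entries, so `det B` is the constant
`det B(0)`, a unit because `det g = det B`.
-/

open Polynomial Matrix

noncomputable section

open Finset

lemma mul_apply_eq_sum_succ_of_apply_zero {α ι κ : Type*} [NonUnitalNonAssocSemiring α] {n : ℕ}
    {g : Matrix ι (Fin (n+1)) α} {i : ι} (hi : g i 0 = 0) (M : Matrix (Fin (n+1)) κ α) (j : κ) :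
    (g * M) i j = ∑ k : Fin n, g i k.succ * M k.succ j := by
  rw [mul_apply, Fin.sum_univ_succ, hi, zero_mul, zero_add]

section Krylov

variable {R : Type*} [CommRing R] {m : ℕ}

def krylovMatrix (T : Matrix (Fin m) (Fin m) R) (u : Fin m → R) : Matrix (Fin m) (Fin m) R :=
  Matrix.of fun i j => (T ^ (j : ℕ) *ᵥ u) i

lemma det_mul_one_add_of_strictUpper (M U : Matrix (Fin m) (Fin m) R)
    (hU : ∀ i j, j ≤ i → U i j = 0) : (M * (1 + U)).det = M.det := by
  have hP : (1 + U).det = 1 := by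
    rw [det_of_isUpperTriangular fun i j hij => by
      simp [hU i j hij.le, one_apply_ne (show i ≠ j from hij.ne')]]
    simp [hU]
  rw [det_mul, hP, mul_one]

lemma sum_univ_ite_lt_eq_sum_range {β : Type*} [AddCommMonoid β] (f : ℕ → β) {j : ℕ}
    (hj : j ≤ m) : ∑ l : Fin m, (if (l : ℕ) < j then f l else 0) = ∑ l ∈ range j, f l := by
  rw [Fin.sum_univ_eq_sum_range (fun l => if l < j then f l else 0), ← sum_filter]
  congr 1
  ext l
  simp only [mem_filter, mem_range]
  omega

lemma mulVec_pow_mulVec_of_mul_eq_add_vecMulVec (B T T' : Matrix (Fin m) (Fin m) R)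
    (u u' w : Fin m → R) (hu : B *ᵥ u' = u) (hT : B * T' = T * B + vecMulVec u w) (k : ℕ) :
    B *ᵥ (T' ^ k *ᵥ u') =
      T ^ k *ᵥ u + ∑ l ∈ range k, (w ⬝ᵥ (T' ^ (k - (l + 1)) *ᵥ u')) • (T ^ l *ᵥ u) := by
  induction k with
  | zero => simp [hu]
  | succ k ih =>
    have hstep : B *ᵥ (T' ^ (k + 1) *ᵥ u') =
        T *ᵥ (B *ᵥ (T' ^ k *ᵥ u')) + (w ⬝ᵥ (T' ^ k *ᵥ u')) • u := by
      rw [pow_succ', ← mulVec_mulVec, mulVec_mulVec, hT, add_mulVec, ← mulVec_mulVec,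
        vecMulVec_mulVec, op_smul_eq_smul]
    rw [hstep, ih, mulVec_add, mulVec_sum, sum_range_succ' _ k, add_assoc]
    simp only [mulVec_smul, mulVec_mulVec, ← pow_succ', pow_zero, one_mulVec, Nat.add_sub_cancel,
      Nat.add_sub_add_right]

theorem det_mul_det_krylovMatrix_of_mul_eq_add_vecMulVec (B T T' : Matrix (Fin m) (Fin m) R)
    (u u' w : Fin m → R) (hu : B *ᵥ u' = u) (hT : B * T' = T * B + vecMulVec u w) :
    B.det * (krylovMatrix T' u').det = (krylovMatrix T u).det := by
  let U : Matrix (Fin m) (Fin m) R :=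
    Matrix.of fun l j => if l < j then w ⬝ᵥ (T' ^ ((j : ℕ) - (l + 1)) *ᵥ u') else 0
  have hBK : B * krylovMatrix T' u' = krylovMatrix T u * (1 + U) := by
    ext i j
    have hcol := congrFun (mulVec_pow_mulVec_of_mul_eq_add_vecMulVec B T T' u u' w hu hT j) i
    rw [Matrix.mul_add, Matrix.mul_one, Matrix.add_apply]
    refine hcol.trans ?_
    simp only [U, krylovMatrix, mul_apply, of_apply, Pi.add_apply, Finset.sum_apply,
      Pi.smul_apply, smul_eq_mul, mul_ite, mul_zero, Fin.lt_def]
    rw [sum_univ_ite_lt_eq_sum_range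
      (fun l => (T ^ l *ᵥ u) i * w ⬝ᵥ (T' ^ ((j : ℕ) - (l + 1)) *ᵥ u')) j.is_lt.le]
    simp only [mul_comm]
  rw [← det_mul, hBK, det_mul_one_add_of_strictUpper]
  intro l j hjl
  simp [U, not_lt_of_ge hjl]

end Krylov

lemma Dmat_eq_krylovMatrix (n : ℕ) (A : Matrix (Fin (n+2)) (Fin (n+2)) ℂ[X]) :
    Dmat n A = krylovMatrix (blkT n A) (blkU n A) :=
  rfl

section Blocks

variable {n : ℕ} {g : Matrix (Fin (n+2)) (Fin (n+2)) ℂ[X]}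

lemma blkT_mulVec_blkU_of_mul_eq (hg00 : g 0 0 = 1) (hg0 : ∀ i : Fin (n+1), g i.succ 0 = 0)
    {A A' : Matrix (Fin (n+2)) (Fin (n+2)) ℂ[X]} (h : g * A' = A * g) :
    blkT n g *ᵥ blkU n A' = blkU n A := by
  funext i
  have hi := congrFun (congrFun h i.succ) 0
  rw [mul_apply_eq_sum_succ_of_apply_zero (hg0 i), mul_apply, Fin.sum_univ_succ (n := n + 1),
    hg00] at hi
  simpa [blkT, blkU, mulVec, dotProduct, hg0] using hi

lemma blkT_mul_blkT_of_mul_eq (hg0 : ∀ i : Fin (n+1), g i.succ 0 = 0)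
    {A A' : Matrix (Fin (n+2)) (Fin (n+2)) ℂ[X]} (h : g * A' = A * g) :
    blkT n g * blkT n A' = blkT n A * blkT n g + vecMulVec (blkU n A) (fun j => g 0 j.succ) := by
  refine Matrix.ext fun i j => ?_
  have hij := congrFun (congrFun h i.succ) j.succ
  rw [mul_apply_eq_sum_succ_of_apply_zero (hg0 i), mul_apply, Fin.sum_univ_succ (n := n + 1)] at hij
  simpa [blkT, blkU, mul_apply, vecMulVec, add_comm] using hij

lemma det_eq_det_blkT (hg00 : g 0 0 = 1) (hg0 : ∀ i : Fin (n+1), g i.succ 0 = 0) :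
    g.det = (blkT n g).det := by
  rw [det_succ_column_zero, Fin.sum_univ_succ]
  simp [hg0, hg00, blkT, submatrix]

lemma blkT_eq_map_C (hdeg : ∀ i j : Fin (n+1), (g i.succ j.succ).degree ≤ 0) :
    blkT n g = (Matrix.of fun i j : Fin (n+1) => (g i.succ j.succ).coeff 0).map C := by
  refine Matrix.ext fun i j => ?_
  exact eq_C_of_degree_le_zero (hdeg i j)

end Blocks

/-- `det D(g(x)⁻¹A(x)g(x); x) = (det B)⁻¹ · det D(A(x); x)` as polynomials,
where `B` is the constant lower-right block of `g(x)`. -/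
theorem stmt3 (n : ℕ)
    (A g : Matrix (Fin (n+2)) (Fin (n+2)) (Polynomial ℂ)) (hg : Gr n g) :
    (Dmat n (g⁻¹ * A * g)).det =
      Polynomial.C ((Matrix.of fun i j : Fin (n+1) => (g i.succ j.succ).coeff 0).det)⁻¹ *
        (Dmat n A).det := by
  obtain ⟨hg00, hg0, -, hdeg, hunit⟩ := hg
  set B := Matrix.of fun i j : Fin (n+1) => (g i.succ j.succ).coeff 0
  have hconj : g * (g⁻¹ * A * g) = A * g := by
    rw [← Matrix.mul_assoc, ← Matrix.mul_assoc, mul_nonsing_inv g hunit, Matrix.one_mul]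
  have hdetB : (blkT n g).det = C B.det := by
    rw [blkT_eq_map_C hdeg]
    exact (RingHom.map_det C B).symm
  have hB : B.det ≠ 0 :=
    (isUnit_C.mp (hdetB ▸ det_eq_det_blkT hg00 hg0 ▸ hunit)).ne_zero
  have hkey := det_mul_det_krylovMatrix_of_mul_eq_add_vecMulVec _ _ _ _ _ _
    (blkT_mulVec_blkU_of_mul_eq hg00 hg0 hconj) (blkT_mul_blkT_of_mul_eq hg0 hconj)
  rw [Dmat_eq_krylovMatrix, Dmat_eq_krylovMatrix, ← hkey, hdetB, ← mul_assoc, ← C_mul,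
    inv_mul_cancel₀ hB, C_1, one_mul]
end
end

section
/- Let A(x) ∈ M_r(ℂ[x]) and c ∈ ℂ with det D(A(x); c) ≠ 0. If g(x) ∈ G_r satisfies g(x)⁻¹A(x)g(x) = A(x), then g(x) = I_r. (That is, the action of G_r on { A(x) : det D(A(x); c) ≠ 0 } is free.) -/
open Polynomial Matrix

noncomputable section

/-! Writing `g = [[1, s], [0, B]]` and `A = [[v, w], [u, T]]`, the equation `A g = g A` says
`s ⬝ u = 0`, `B u = u`, `B T = T B + u sᵀ` and `sᵀ T = v sᵀ + wᵀ B - wᵀ`. From these, by induction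
on `k`, every Krylov vector `T^k u` is orthogonal to `s` and fixed by `B`, i.e. `sᵀ D = 0` and
`B D = D` for `D = D(A(x); x)`. Since `det D(A(x); c) ≠ 0`, the polynomial `det D(A(x); x)` is
nonzero, so `D` is cancellable over the domain `ℂ[x]`: `s = 0` and `B = 1`. -/

section

variable {R : Type*} [CommRing R]

theorem Matrix.commute_of_inv_mul_mul_eq {ι : Type*} [Fintype ι] [DecidableEq ι]
    {A g : Matrix ι ι R} (hg : IsUnit g.det) (h : g⁻¹ * A * g = A) : Commute A g := by
  change A * g = g * A
  conv_rhs => rw [← h, ← Matrix.mul_assoc, ← Matrix.mul_assoc, mul_nonsing_inv _ hg, one_mul]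

theorem krylov_step {ι : Type*} [Fintype ι] {T B : Matrix ι ι R} {s u w y : ι → R} {v : R}
    (hBT : B * T = T * B + vecMulVec u s) (hsT : s ᵥ* T = v • s + w ᵥ* B - w)
    (hsy : s ⬝ᵥ y = 0) (hBy : B *ᵥ y = y) :
    s ⬝ᵥ (T *ᵥ y) = 0 ∧ B *ᵥ (T *ᵥ y) = T *ᵥ y := by
  constructor
  · rw [dotProduct_mulVec, hsT, sub_dotProduct, add_dotProduct, smul_dotProduct, hsy,
      ← dotProduct_mulVec, hBy, smul_zero, zero_add, sub_self]
  · rw [mulVec_mulVec, hBT, add_mulVec, vecMulVec_mulVec, hsy, ← mulVec_mulVec, hBy]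
    simp

section Blocks

variable {n : ℕ} {A g : Matrix (Fin (n + 1)) (Fin (n + 1)) R}

theorem dotProduct_topRow_firstCol_of_commute (hg00 : g 0 0 = 1)
    (hg0 : ∀ i : Fin n, g i.succ 0 = 0) (h : Commute A g) :
    (fun j : Fin n => g 0 j.succ) ⬝ᵥ (fun i => A i.succ 0) = 0 := by
  have := congrFun₂ h.eq 0 0
  simp only [mul_apply, Fin.sum_univ_succ, hg00, hg0] at this
  simpa [dotProduct] using this

theorem submatrix_mulVec_firstCol_of_commute (hg00 : g 0 0 = 1)
    (hg0 : ∀ i : Fin n, g i.succ 0 = 0) (h : Commute A g) :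
    g.submatrix Fin.succ Fin.succ *ᵥ (fun i => A i.succ 0) = fun i => A i.succ 0 := by
  ext i
  have := congrFun₂ h.eq i.succ 0
  simp only [mul_apply, Fin.sum_univ_succ, hg00, hg0] at this
  simpa [mulVec, dotProduct] using this.symm

theorem submatrix_mul_submatrix_of_commute (hg0 : ∀ i : Fin n, g i.succ 0 = 0)
    (h : Commute A g) :
    g.submatrix Fin.succ Fin.succ * A.submatrix Fin.succ Fin.succ =
      A.submatrix Fin.succ Fin.succ * g.submatrix Fin.succ Fin.succ +
        vecMulVec (fun i => A i.succ 0) (fun j => g 0 j.succ) := by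
  ext i j
  have := congrFun₂ h.eq i.succ j.succ
  simp only [mul_apply, Fin.sum_univ_succ, hg0] at this
  simp only [mul_apply, submatrix_apply, Matrix.add_apply, vecMulVec_apply]
  linear_combination -this

theorem topRow_vecMul_submatrix_of_commute (hg00 : g 0 0 = 1) (h : Commute A g) :
    (fun j : Fin n => g 0 j.succ) ᵥ* A.submatrix Fin.succ Fin.succ =
      A 0 0 • (fun j => g 0 j.succ) + (fun j => A 0 j.succ) ᵥ* g.submatrix Fin.succ Fin.succ -
        fun j => A 0 j.succ := by
  ext j
  have := congrFun₂ h.eq 0 j.succ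
  simp only [mul_apply, Fin.sum_univ_succ, hg00] at this
  simp only [vecMul, dotProduct, submatrix_apply, Pi.sub_apply, Pi.add_apply, Pi.smul_apply,
    smul_eq_mul]
  linear_combination -this

theorem krylov_vectors_of_commute (hg00 : g 0 0 = 1) (hg0 : ∀ i : Fin n, g i.succ 0 = 0)
    (h : Commute A g) (k : ℕ) :
    (fun j => g 0 j.succ) ⬝ᵥ (A.submatrix Fin.succ Fin.succ ^ k *ᵥ fun i => A i.succ 0) = 0 ∧
      g.submatrix Fin.succ Fin.succ *ᵥ (A.submatrix Fin.succ Fin.succ ^ k *ᵥ fun i => A i.succ 0) =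
        A.submatrix Fin.succ Fin.succ ^ k *ᵥ fun i => A i.succ 0 := by
  induction k with
  | zero =>
    simpa using ⟨dotProduct_topRow_firstCol_of_commute hg00 hg0 h,
      submatrix_mulVec_firstCol_of_commute hg00 hg0 h⟩
  | succ k ih =>
    rw [pow_succ', ← mulVec_mulVec]
    exact krylov_step (submatrix_mul_submatrix_of_commute hg0 h)
      (topRow_vecMul_submatrix_of_commute hg00 h) ih.1 ih.2

theorem eq_one_of_blocks (hg00 : g 0 0 = 1) (hg0 : ∀ i : Fin n, g i.succ 0 = 0)
    (hs : (fun j : Fin n => g 0 j.succ) = 0) (hB : g.submatrix Fin.succ Fin.succ = 1) : g = 1 := by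
  ext i j
  refine Fin.cases ?_ (fun i => ?_) i <;> refine Fin.cases ?_ (fun j => ?_) j
  · simp [hg00]
  · simpa [one_apply_ne (Fin.succ_ne_zero j).symm] using congrFun hs j
  · simp [hg0]
  · simpa [one_apply] using congrFun₂ hB i j

end Blocks

theorem Matrix.eq_one_of_mul_eq_self_of_det_ne_zero [IsDomain R] {ι : Type*} [Fintype ι]
    [DecidableEq ι] {D B : Matrix ι ι R} (hD : D.det ≠ 0) (hB : B * D = D) : B = 1 :=
  isRightRegular_iff_nonsingular.mpr (nonsingular_iff_det_ne_zero.mpr hD) (by simpa using hB)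

end

/-- `G_r` acts freely on `{ A(x) : det D(A(x); c) ≠ 0 }`. -/
theorem stmt4 (n : ℕ)
    (A : Matrix (Fin (n+2)) (Fin (n+2)) (Polynomial ℂ)) (c : ℂ)
    (hD : (Dc n A c).det ≠ 0)
    (g : Matrix (Fin (n+2)) (Fin (n+2)) (Polynomial ℂ)) (hg : Gr n g)
    (hfix : g⁻¹ * A * g = A) :
    g = 1 := by
  obtain ⟨hg00, hg0, -, -, hunit⟩ := hg
  have hkrylov := krylov_vectors_of_commute hg00 hg0 (Matrix.commute_of_inv_mul_mul_eq hunit hfix)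
  have hdet : (Dmat n A).det ≠ 0 := by
    refine fun h => hD ?_
    rw [Dc, ← coe_evalRingHom, ← RingHom.mapMatrix_apply, ← RingHom.map_det, h, map_zero]
  have hs : (fun j => g 0 j.succ) ᵥ* Dmat n A = 0 := funext fun j => (hkrylov j).1
  have hB : g.submatrix Fin.succ Fin.succ * Dmat n A = Dmat n A :=
    Matrix.ext fun i j => congrFun (hkrylov j).2 i
  exact eq_one_of_blocks hg00 hg0 (Matrix.eq_zero_of_vecMul_eq_zero hdet hs)
    (Matrix.eq_one_of_mul_eq_self_of_det_ne_zero hdet hB)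
end
end

section
/- Set g = (r−1)(rd−2)/2. Let A(x) ∈ M(r,d) be such that its characteristic polynomial det(y·I_r − A(x)) is irreducible as a polynomial in y over the field ℂ(x). Then for any g+1 distinct complex numbers c₁, …, c_{g+1}, there exists an index i with det D(A(x); c_i) ≠ 0. -/
open Polynomial Matrix

noncomputable section

/-- The characteristic polynomial `det(y·I_r − A(x))` of `A(x)`, regarded as a polynomial
in `y` over the rational function field `ℂ(x)`. -/
def charPolyRat (n : ℕ) (A : Matrix (Fin (n+2)) (Fin (n+2)) (Polynomial ℂ)) :
    Polynomial (RatFunc ℂ) :=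
  (A.map (algebraMap (Polynomial ℂ) (RatFunc ℂ))).charpoly

theorem sum_mulVec' {K : Type*} [CommRing K] {m : ℕ} {ι : Type*} (s : Finset ι)
    (M : ι → Matrix (Fin m) (Fin m) K) (e : Fin m → K) :
    (∑ j ∈ s, M j) *ᵥ e = ∑ j ∈ s, (M j *ᵥ e) := by
  ext i
  simp only [Matrix.mulVec, dotProduct, Matrix.sum_apply, Finset.sum_mul,
    Finset.sum_apply]
  rw [Finset.sum_comm]

theorem indep_pows {K : Type*} [Field K] {m : ℕ} (B : Matrix (Fin (m+1)) (Fin (m+1)) K)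
    (hirr : Irreducible B.charpoly) (e : Fin (m+1) → K) (he : e ≠ 0) :
    LinearIndependent K (fun j : Fin (m+1) => (B ^ (j : ℕ)) *ᵥ e) := by
  rw [Fintype.linearIndependent_iff]
  by_contra hcon
  push_neg at hcon
  obtain ⟨g, hg0, i0, hgi0⟩ := hcon
  set p : Polynomial K := ∑ j : Fin (m+1), C (g j) * X ^ (j : ℕ) with hp
  have hpne : p ≠ 0 := by
    intro h
    apply hgi0
    have : p.coeff (i0 : ℕ) = g i0 := by
      rw [hp, Polynomial.finset_sum_coeff]
      rw [Finset.sum_eq_single i0]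
      · simp
      · intro b _ hb
        rw [coeff_C_mul, coeff_X_pow, if_neg (by simpa [Fin.val_eq_val] using (Ne.symm hb)), mul_zero]
      · simp
    rw [h] at this
    simpa using this.symm
  have hpd : p.natDegree ≤ m := by
    apply Polynomial.natDegree_sum_le_of_forall_le
    intro j _
    exact (natDegree_C_mul_le _ _).trans (by simp [Fin.is_le])
  have hpB : (aeval B p) *ᵥ e = 0 := by
    have h1 : aeval B p = ∑ j : Fin (m+1), g j • B ^ (j : ℕ) := by
      rw [hp, map_sum]
      congr 1; ext j
      rw [_root_.map_mul, aeval_C, map_pow, aeval_X]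
      simp [Algebra.algebraMap_eq_smul_one, smul_mul_assoc]
    rw [h1, sum_mulVec']
    simpa [Matrix.smul_mulVec] using hg0
  have hdim : B.charpoly.natDegree = m + 1 := by
    rw [Matrix.charpoly_natDegree_eq_dim, Fintype.card_fin]
  have hnd : ¬ B.charpoly ∣ p := by
    intro hdvd
    have := Polynomial.natDegree_le_of_dvd hdvd hpne
    omega
  have hcop : IsCoprime B.charpoly p := hirr.coprime_iff_not_dvd.mpr hnd
  obtain ⟨a, b, hab⟩ := hcop
  have h2 := congrArg (fun q => (aeval B q) *ᵥ e) hab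
  simp only [map_add, _root_.map_mul, _root_.map_one, Matrix.aeval_self_charpoly] at h2
  rw [Matrix.add_mulVec, mul_zero, Matrix.zero_mulVec, ← Matrix.mulVec_mulVec, hpB,
    Matrix.mulVec_zero] at h2
  exact he (by simpa using h2.symm)

/-- If the characteristic polynomial of `B` is irreducible, then the Krylov-type matrix
built from the lower-left column `u` and lower-right block `T` of `B` is nonsingular. -/
theorem det_block_ne_zero {K : Type*} [Field K] {n : ℕ}
    (B : Matrix (Fin (n+2)) (Fin (n+2)) K) (hirr : Irreducible B.charpoly)
    (T' : Matrix (Fin (n+1)) (Fin (n+1)) K) (hT' : ∀ i j, T' i j = B i.succ j.succ)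
    (u' : Fin (n+1) → K) (hu' : ∀ i, u' i = B i.succ 0) :
    (Matrix.of fun i j : Fin (n+1) => ((T' ^ (j : ℕ)) *ᵥ u') i).det ≠ 0 := by
  intro hdet
  set e : Fin (n+2) → K := Pi.single 0 1 with he
  have hene : e ≠ 0 := fun h => by simpa [he] using congrFun h 0
  have hind : LinearIndependent K (fun j : Fin (n+2) => (B ^ (j : ℕ)) *ᵥ e) :=
    indep_pows (m := n+1) B hirr e hene
  obtain ⟨v, hvne, hv⟩ := Matrix.exists_vecMul_eq_zero_iff.mpr hdet
  set f : (Fin (n+1) → K) →ₗ[K] K := ∑ i : Fin (n+1), v i • LinearMap.proj i with hf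
  have hfapp : ∀ x : Fin (n+1) → K, f x = ∑ i : Fin (n+1), v i * x i := by
    intro x
    simp [hf, LinearMap.sum_apply, LinearMap.smul_apply, LinearMap.proj_apply, smul_eq_mul]
  have hcol : ∀ j : Fin (n+1), f ((T' ^ (j : ℕ)) *ᵥ u') = 0 := by
    intro j
    have h0 := congrFun hv j
    rw [Matrix.vecMul, dotProduct] at h0
    simp only [Pi.zero_apply] at h0
    rw [hfapp, ← h0]
    rfl
  set colN : ℕ → (Fin (n+1) → K) := fun j => (T' ^ j) *ᵥ u' with hcolN
  set S : ℕ → Submodule K (Fin (n+1) → K) := fun j => Submodule.span K (colN '' Set.Iio j) with hS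
  have hSmono : ∀ {j k : ℕ}, j ≤ k → S j ≤ S k := by
    intro j k hjk
    exact Submodule.span_mono (Set.image_mono (fun x hx => lt_of_lt_of_le hx hjk))
  have hSker : S (n+1) ≤ LinearMap.ker f := by
    rw [hS, Submodule.span_le]
    rintro x ⟨j, hj, rfl⟩
    simp only [Set.mem_Iio] at hj
    have := hcol ⟨j, hj⟩
    simpa [LinearMap.mem_ker, hcolN] using this
  have hTstep : ∀ j : ℕ, ∀ x ∈ S j, T' *ᵥ x ∈ S (j+1) := by
    intro j x hx
    have hle : Submodule.map (Matrix.mulVecLin T') (S j) ≤ S (j+1) := by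
      rw [hS, Submodule.map_span_le]
      rintro m ⟨k, hk, rfl⟩
      simp only [Set.mem_Iio] at hk
      apply Submodule.subset_span
      refine ⟨k+1, by simpa using Nat.succ_lt_succ hk, ?_⟩
      rw [hcolN]
      simp only [Matrix.mulVecLin_apply]
      rw [Matrix.mulVec_mulVec, ← pow_succ']
    exact hle ⟨x, hx, rfl⟩
  set lproj : (Fin (n+2) → K) →ₗ[K] (Fin (n+1) → K) := LinearMap.funLeft K K Fin.succ with hlp
  have hlower : ∀ z : Fin (n+2) → K, lproj (B *ᵥ z) = z 0 • u' + T' *ᵥ (lproj z) := by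
    intro z
    ext i
    rw [hlp]
    simp only [LinearMap.funLeft_apply, Pi.add_apply, Pi.smul_apply, smul_eq_mul]
    rw [Matrix.mulVec, dotProduct, Fin.sum_univ_succ]
    congr 1
    · rw [hu' i, mul_comm]
    · rw [Matrix.mulVec, dotProduct]
      apply Finset.sum_congr rfl
      intro k _
      rw [hT' i k]
      rfl
  have hmem : ∀ j : ℕ, lproj ((B ^ j) *ᵥ e) ∈ S j := by
    intro j
    induction j with
    | zero =>
      have : lproj ((B ^ 0) *ᵥ e) = 0 := by
        ext i
        rw [hlp]
        simp [he, Matrix.one_mulVec, Pi.single_apply, Fin.succ_ne_zero]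
      rw [this]
      exact Submodule.zero_mem _
    | succ j ih =>
      have hstep : (B ^ (j+1)) *ᵥ e = B *ᵥ ((B ^ j) *ᵥ e) := by
        rw [Matrix.mulVec_mulVec, ← pow_succ']
      rw [hstep, hlower]
      apply Submodule.add_mem
      · apply Submodule.smul_mem
        apply hSmono (Nat.le_add_left 1 j)
        apply Submodule.subset_span
        exact ⟨0, by simp, by rw [hcolN]; simp [Matrix.one_mulVec]⟩
      · exact hTstep j _ ih
  set F : (Fin (n+2) → K) →ₗ[K] K := f.comp lproj with hF
  set U : Submodule K (Fin (n+2) → K) := LinearMap.ker F with hU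
  have hmemU : ∀ j : Fin (n+2), (B ^ (j : ℕ)) *ᵥ e ∈ U := by
    intro j
    rw [hU, LinearMap.mem_ker, hF, LinearMap.comp_apply]
    exact hSker (hSmono (Nat.lt_succ_iff.mp j.isLt) (hmem (j : ℕ)))
  have hUproper : U < ⊤ := by
    rw [lt_top_iff_ne_top]
    intro htop
    obtain ⟨i0, hi0⟩ := Function.ne_iff.mp hvne
    simp only [Pi.zero_apply] at hi0
    have hy : (Pi.single (Fin.succ i0) 1 : Fin (n+2) → K) ∈ U := htop ▸ Submodule.mem_top
    rw [hU, LinearMap.mem_ker, hF, LinearMap.comp_apply, hfapp] at hy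
    apply hi0
    rw [← hy, Finset.sum_eq_single i0]
    · rw [hlp]
      simp
    · intro b _ hb
      rw [hlp]
      simp only [LinearMap.funLeft_apply]
      rw [Pi.single_apply, if_neg (by simpa [Fin.succ_inj] using hb), mul_zero]
    · simp
  have hfinU : Module.finrank K U ≤ n + 1 := by
    have h1 : Module.finrank K U < Module.finrank K (Fin (n+2) → K) :=
      Submodule.finrank_lt hUproper.ne
    rw [Module.finrank_fin_fun] at h1
    omega
  set w : Fin (n+2) → U := fun j => ⟨(B ^ (j : ℕ)) *ᵥ e, hmemU j⟩ with hw
  have hwind : LinearIndependent K w := by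
    apply LinearIndependent.of_comp U.subtype
    exact hind
  have := hwind.fintype_card_le_finrank
  rw [Fintype.card_fin] at this
  omega


theorem degree_pow_entry (n d : ℕ) (A : Matrix (Fin (n+2)) (Fin (n+2)) (Polynomial ℂ))
    (hA : Mrd n d A) (j : ℕ) :
    ∀ i k, ((blkT n A ^ j) i k).degree ≤ ((j*d : ℕ) : WithBot ℕ) := by
  induction j with
  | zero =>
    intro i k
    rw [pow_zero, Matrix.one_apply]
    by_cases h : i = k
    · simp [h]
    · simp [h]
  | succ j ih =>
    intro i k
    rw [pow_succ, Matrix.mul_apply]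
    refine le_trans (Polynomial.degree_sum_le _ _) ?_
    apply Finset.sup_le
    intro l _
    refine le_trans (Polynomial.degree_mul_le _ _) ?_
    have h1 := ih i l
    have h2 := hA.2.2.2 l k
    have h3 : ((blkT n A) l k).degree ≤ (d : WithBot ℕ) := h2
    calc ((blkT n A ^ j) i l).degree + ((blkT n A) l k).degree
        ≤ ((j*d : ℕ) : WithBot ℕ) + (d : WithBot ℕ) := add_le_add h1 h3
      _ = (((j+1)*d : ℕ) : WithBot ℕ) := by
          rw [← Nat.cast_add]
          congr 1
          ring

theorem degree_Dmat_entry (n d : ℕ) (A : Matrix (Fin (n+2)) (Fin (n+2)) (Polynomial ℂ))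
    (hA : Mrd n d A) (i j : Fin (n+1)) :
    (Dmat n A i j).degree ≤ (((j : ℕ)*d + (d-1) : ℕ) : WithBot ℕ) := by
  show (((blkT n A ^ (j : ℕ)) *ᵥ blkU n A) i).degree ≤ _
  rw [Matrix.mulVec, dotProduct]
  refine le_trans (Polynomial.degree_sum_le _ _) ?_
  apply Finset.sup_le
  intro l _
  refine le_trans (Polynomial.degree_mul_le _ _) ?_
  calc ((blkT n A ^ (j:ℕ)) i l).degree + (blkU n A l).degree
      ≤ (((j:ℕ)*d : ℕ) : WithBot ℕ) + ((d-1 : ℕ) : WithBot ℕ) :=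
        add_le_add (degree_pow_entry n d A hA (j:ℕ) i l) (hA.2.2.1 l)
    _ = _ := by rw [← Nat.cast_add]

set_option maxHeartbeats 1000000 in
theorem natDegree_det_Dmat (n d : ℕ) (hd : 1 ≤ d) (A : Matrix (Fin (n+2)) (Fin (n+2)) (Polynomial ℂ))
    (hA : Mrd n d A) : (Dmat n A).det.natDegree ≤ (n+1) * ((n+2)*d - 2) / 2 := by
  set N : ℕ := ∑ i : Fin (n+1), ((i:ℕ)*d + (d-1)) with hN
  have hdeg : (Dmat n A).det.degree ≤ (N : WithBot ℕ) := by
    rw [Matrix.det_apply']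
    refine le_trans (Polynomial.degree_sum_le _ _) ?_
    apply Finset.sup_le
    intro σ _
    refine le_trans (Polynomial.degree_mul_le _ _) ?_
    have h0 : ((↑↑(Equiv.Perm.sign σ) : Polynomial ℂ)).degree ≤ 0 := Polynomial.degree_intCast_le _
    refine le_trans (add_le_add h0 (Polynomial.degree_prod_le _ _)) ?_
    rw [zero_add, hN, Nat.cast_sum]
    apply Finset.sum_le_sum
    intro i _
    exact degree_Dmat_entry n d A hA (σ i) i
  have hnat : (Dmat n A).det.natDegree ≤ N := Polynomial.natDegree_le_iff_degree_le.mpr hdeg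
  refine le_trans hnat ?_
  -- arithmetic
  obtain ⟨e, rfl⟩ : ∃ e, d = 1 + e := ⟨d - 1, by omega⟩
  rw [Nat.le_div_iff_mul_le (by norm_num)]
  set S : ℕ := ∑ i : Fin (n+1), (i:ℕ) with hSdef
  have h2S : S * 2 = (n+1) * n := by
    have hs : S = ∑ i ∈ Finset.range (n+1), i := Fin.sum_univ_eq_sum_range (fun i => i) (n+1)
    rw [hs, Finset.sum_range_id_mul_two]
    simp
  have hNeq : N = S * (1+e) + (n+1) * e := by
    rw [hN, Finset.sum_add_distrib, ← Finset.sum_mul, ← hSdef]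
    congr 1
    simp [Finset.sum_const, Finset.card_univ, Nat.add_sub_cancel_left, mul_comm]
  have hsub : (n+2)*(1+e) - 2 = (n+2)*e + n := by
    have : (n+2)*(1+e) = ((n+2)*e + n) + 2 := by ring
    rw [this, Nat.add_sub_cancel]
  rw [hNeq, hsub]
  apply le_of_eq
  calc (S * (1+e) + (n+1)*e) * 2 = (S*2) * (1+e) + (n+1)*e*2 := by ring
    _ = (n+1)*n*(1+e) + (n+1)*e*2 := by rw [h2S]
    _ = (n+1)*((n+2)*e + n) := by ring


/-- if `A(x) ∈ M(r,d)` has irreducible characteristic polynomial over `ℂ(x)`,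
then among any `g+1` distinct points `c₁, …, c_{g+1}`, with `g = (r−1)(rd−2)/2`, there is
one with `det D(A(x); cᵢ) ≠ 0`. -/
theorem stmt5 (n d : ℕ) (hd : 1 ≤ d)
    (A : Matrix (Fin (n+2)) (Fin (n+2)) (Polynomial ℂ)) (hA : Mrd n d A)
    (hirr : Irreducible (charPolyRat n A))
    (c : Fin ((n+1) * ((n+2)*d - 2) / 2 + 1) → ℂ) (hc : Function.Injective c) :
    ∃ i, (Dc n A (c i)).det ≠ 0 := by
  classical
  set P : Polynomial ℂ := (Dmat n A).det with hP
  have hPne : P ≠ 0 := by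
    intro h0
    set φ := algebraMap (Polynomial ℂ) (RatFunc ℂ) with hφ
    have key := det_block_ne_zero (A.map φ) hirr ((blkT n A).map φ) (fun i j => rfl)
      (fun i => φ (blkU n A i)) (fun i => rfl)
    apply key
    have hEq : (Matrix.of fun i j : Fin (n+1) =>
        ((((blkT n A).map φ) ^ (j : ℕ)) *ᵥ (fun i => φ (blkU n A i))) i)
        = (Dmat n A).map φ := by
      ext i j
      show ((((blkT n A).map φ) ^ (j : ℕ)) *ᵥ (fun i => φ (blkU n A i))) i
        = φ ((Dmat n A) i j)
      have hpow : ((blkT n A).map φ) ^ (j : ℕ) = ((blkT n A) ^ (j : ℕ)).map φ := by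
        simpa [RingHom.mapMatrix_apply] using (map_pow (φ.mapMatrix) (blkT n A) (j : ℕ)).symm
      rw [hpow]
      show _ = φ (((blkT n A ^ (j : ℕ)) *ᵥ blkU n A) i)
      rw [Matrix.mulVec, Matrix.mulVec, dotProduct, dotProduct, map_sum]
      simp [Matrix.map_apply]
    rw [hEq, show (Dmat n A).map ⇑φ = φ.mapMatrix (Dmat n A) from rfl, ← RingHom.map_det,
      ← hP, h0, map_zero]
  by_contra hcon
  push_neg at hcon
  have hroot : ∀ i, Polynomial.eval (c i) P = 0 := by
    intro i
    have h := RingHom.map_det (Polynomial.evalRingHom (c i)) (Dmat n A)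
    have hdc : Polynomial.eval (c i) P = (Dc n A (c i)).det := by
      simpa [Dc, RingHom.mapMatrix_apply, Polynomial.coe_evalRingHom, hP] using h
    rw [hdc]
    exact hcon i
  have hsub : Finset.univ.image c ⊆ P.roots.toFinset := by
    intro x hx
    obtain ⟨i, _, rfl⟩ := Finset.mem_image.mp hx
    rw [Multiset.mem_toFinset, Polynomial.mem_roots hPne]
    exact hroot i
  have hcard : (n+1) * ((n+2)*d - 2) / 2 + 1 ≤ P.natDegree := by
    calc (n+1) * ((n+2)*d - 2) / 2 + 1 = (Finset.univ.image c).card := by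
          rw [Finset.card_image_of_injective _ hc, Finset.card_univ, Fintype.card_fin]
      _ ≤ P.roots.toFinset.card := Finset.card_le_card hsub
      _ ≤ Multiset.card P.roots := Multiset.toFinset_card_le _
      _ ≤ P.natDegree := Polynomial.card_roots' P
  have hbound := natDegree_det_Dmat n d hd A hA
  rw [← hP] at hbound
  omega
end
end

section
/- Let A(x) ∈ M_r(ℂ[x]) be such that its characteristic polynomial det(y·I_r − A(x)) is irreducible as a polynomial in y over ℂ(x). If g(x) ∈ G_r satisfies g(x)⁻¹A(x)g(x) = A(x), then g(x) = I_r. (That is, G_r acts freely on the set of A(x) with irreducible characteristic polynomial.) -/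
open Polynomial Matrix

noncomputable section

/-! Over `ℂ(x)`, `g` commutes with `A` and fixes the first basis vector `e₀`. Since the
characteristic polynomial `χ` of `A` is irreducible, every polynomial `p` with `p(A) v = 0` for
some `v ≠ 0` is divisible by `χ` (otherwise a Bézout relation `a χ + b p = 1` and Cayley–Hamilton
give `v = 0`). Hence `e₀, A e₀, …, A^{r-1} e₀` are linearly independent, so they form a basis;
`g` fixes each of them because it commutes with `A`, so `g = 1`. -/

namespace Matrix

section CyclicVector

variable {K ι : Type*} [Field K] [Fintype ι] [DecidableEq ι] {M : Matrix ι ι K} {v : ι → K}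

theorem charpoly_dvd_of_aeval_mulVec_eq_zero (hM : Irreducible M.charpoly) (hv : v ≠ 0)
    {p : K[X]} (hp : aeval M p *ᵥ v = 0) : M.charpoly ∣ p := by
  by_contra hdvd
  obtain ⟨a, b, hab⟩ := (hM.coprime_iff_not_dvd).mpr hdvd
  apply hv
  calc v = aeval M (a * M.charpoly + b * p) *ᵥ v := by rw [hab, map_one, one_mulVec]
    _ = 0 := by
      simp only [map_add, map_mul, add_mulVec, ← mulVec_mulVec, aeval_self_charpoly, hp,
        zero_mulVec, mulVec_zero, add_zero]

theorem linearIndependent_pow_mulVec (hM : Irreducible M.charpoly) (hv : v ≠ 0) :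
    LinearIndependent K fun k : Fin (Fintype.card ι) => (M ^ (k : ℕ)) *ᵥ v := by
  rw [Fintype.linearIndependent_iff]
  intro c hc
  set p : K[X] := ∑ k : Fin (Fintype.card ι), C (c k) * X ^ (k : ℕ)
  have hpv : aeval M p *ᵥ v = 0 := by
    simp only [p, map_sum, sum_mulVec, map_mul, aeval_C, aeval_X_pow, ← Algebra.smul_def,
      smul_mulVec]
    exact hc
  have hp : p = 0 := eq_zero_of_dvd_of_degree_lt (charpoly_dvd_of_aeval_mulVec_eq_zero hM hv hpv)
    (by rw [charpoly_degree_eq_dim]; exact degree_sum_fin_lt c)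
  intro k
  simpa [p, coeff_C_mul_X_pow, Fin.val_inj] using congr_arg (coeff · k) hp

theorem span_pow_mulVec_eq_top (hM : Irreducible M.charpoly) (hv : v ≠ 0) :
    Submodule.span K (Set.range fun k : ℕ => (M ^ k) *ᵥ v) = ⊤ := by
  obtain ⟨i, -⟩ := Function.ne_iff.mp hv
  have : Nonempty (Fin (Fintype.card ι)) := ⟨⟨0, Fintype.card_pos_iff.mpr ⟨i⟩⟩⟩
  refine eq_top_mono (Submodule.span_mono ?_)
    ((linearIndependent_pow_mulVec hM hv).span_eq_top_of_card_eq_finrank ?_)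
  · rintro _ ⟨k, rfl⟩; exact ⟨k, rfl⟩
  · simp

theorem eq_one_of_commute_of_mulVec_eq_self (hM : Irreducible M.charpoly) (hv : v ≠ 0)
    {N : Matrix ι ι K} (hNM : Commute N M) (hNv : N *ᵥ v = v) : N = 1 := by
  refine toLin'.injective (LinearMap.ext_on_range (span_pow_mulVec_eq_top hM hv) fun k => ?_)
  rw [toLin'_one, LinearMap.id_apply, toLin'_apply, mulVec_mulVec, (hNM.pow_right k).eq,
    ← mulVec_mulVec, hNv]

end CyclicVector

theorem commute_of_inv_mul_mul_eq_self {ι R : Type*} [Fintype ι] [DecidableEq ι] [CommRing R]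
    {g A : Matrix ι ι R} (hg : IsUnit g.det) (hfix : g⁻¹ * A * g = A) : Commute g A :=
  calc g * A = g * (g⁻¹ * A * g) := by rw [hfix]
    _ = A * g := by rw [← Matrix.mul_assoc, ← Matrix.mul_assoc, mul_nonsing_inv g hg, one_mul]

end Matrix

theorem Gr.map_mulVec_single_zero {n : ℕ} {g : Matrix (Fin (n+2)) (Fin (n+2)) ℂ[X]}
    (hg : Gr n g) {R : Type*} [CommRing R] (f : ℂ[X] →+* R) :
    g.map f *ᵥ Pi.single 0 1 = Pi.single 0 1 := by
  ext i
  rw [mulVec_single_one]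
  cases i using Fin.cases with
  | zero => simp [hg.1]
  | succ i => simp [hg.2.1 i]

/-- `G_r` acts freely on the set of `A(x)` whose characteristic polynomial
`det(y·I_r − A(x))` is irreducible over `ℂ(x)`. -/
theorem stmt6 (n : ℕ)
    (A : Matrix (Fin (n+2)) (Fin (n+2)) (Polynomial ℂ))
    (hirr : Irreducible ((A.map (algebraMap (Polynomial ℂ) (RatFunc ℂ))).charpoly))
    (g : Matrix (Fin (n+2)) (Fin (n+2)) (Polynomial ℂ)) (hg : Gr n g)
    (hfix : g⁻¹ * A * g = A) :
    g = 1 := by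
  set f := algebraMap ℂ[X] (RatFunc ℂ)
  have hcomm : Commute (g.map f) (A.map f) :=
    (commute_of_inv_mul_mul_eq_self hg.2.2.2.2 hfix).map f.mapMatrix
  have hmap_eq_one : g.map f = 1 :=
    eq_one_of_commute_of_mulVec_eq_self hirr (Pi.single_ne_zero_iff.mpr one_ne_zero) hcomm
      (hg.map_mulVec_single_zero f)
  exact map_injective (IsFractionRing.injective ℂ[X] (RatFunc ℂ)) (by simpa using hmap_eq_one)
end
end

section
/- Let r ≥ 2 and let C ∈ M_r(ℂ) be a semisimple (i.e., diagonalizable) matrix. Write the transpose as ᵗC = [[γ, ᵗδ],[c, C₀]] with γ ∈ ℂ, δ, c ∈ ℂ^{r−1} and C₀ ∈ M_{r−1}(ℂ), and set D = (c, C₀c, …, C₀^{r−2}c) ∈ M_{r−1}(ℂ). Let W ⊆ ℂ^r be the linear subspace spanned by all eigenvectors of C whose first entry is zero (i.e., all nonzero v ∈ ℂ^r with Cv = λv for some λ ∈ ℂ and v₁ = 0). Then dim W = r − 1 − rank D. -/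
open Matrix Polynomial Module Set

noncomputable section

namespace Stmt10Aux

/-- Krylov span stabilization. -/
lemma krylov_span (N : ℕ) (M : Matrix (Fin N) (Fin N) ℂ) (c : Fin N → ℂ) :
    Submodule.span ℂ (Set.range fun j : ℕ => (M ^ j) *ᵥ c) =
      Submodule.span ℂ (Set.range fun j : Fin N => (M ^ (j : ℕ)) *ᵥ c) := by
  set S : ℕ → Submodule ℂ (Fin N → ℂ) :=
    fun k => Submodule.span ℂ ((fun j : ℕ => (M ^ j) *ᵥ c) '' {j | j < k}) with hS
  have hmono : Monotone S := fun a b hab =>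
    Submodule.span_mono (Set.image_mono fun j hj => lt_of_lt_of_le hj hab)
  have hmem : ∀ k j, j < k → (M ^ j) *ᵥ c ∈ S k := fun k j hj =>
    Submodule.subset_span ⟨j, hj, rfl⟩
  -- there is k ≤ N with M^k c ∈ S k
  have hex : ∃ k ≤ N, (M ^ k) *ᵥ c ∈ S k := by
    by_contra hcon
    push_neg at hcon
    have hstrict : ∀ k ≤ N, S k < S (k + 1) := by
      intro k hk
      refine lt_of_le_of_ne (hmono (Nat.le_succ k)) fun h => hcon k hk ?_
      rw [h]; exact hmem (k+1) k (Nat.lt_succ_self k)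
    have hrank : ∀ k ≤ N + 1, k ≤ Module.finrank ℂ (S k) := by
      intro k hk
      induction k with
      | zero => simp
      | succ m ih =>
        have h1 := hstrict m (Nat.lt_succ_iff.mp hk)
        have := Submodule.finrank_lt_finrank_of_lt h1
        omega
    have h1 := hrank (N + 1) le_rfl
    have h2 : Module.finrank ℂ (S (N+1)) ≤ Module.finrank ℂ (Fin N → ℂ) :=
      Submodule.finrank_le _
    simp [Module.finrank_pi] at h2
    omega
  obtain ⟨k, hkN, hk⟩ := hex
  -- S k is M-invariant
  have hinv : ∀ x ∈ S k, M *ᵥ x ∈ S k := by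
    intro x hx
    induction hx using Submodule.span_induction with
    | mem y hy =>
      obtain ⟨j, hj, rfl⟩ := hy
      simp only [Set.mem_setOf_eq] at hj
      show M *ᵥ ((M ^ j) *ᵥ c) ∈ S k
      rw [Matrix.mulVec_mulVec, ← pow_succ']
      rcases Nat.lt_or_ge (j+1) k with h | h
      · exact hmem k (j+1) h
      · have : j + 1 = k := by omega
        rw [this]; exact hk
    | zero => simp
    | add y z _ _ hy hz => rw [Matrix.mulVec_add]; exact Submodule.add_mem _ hy hz
    | smul a y _ hy => rw [Matrix.mulVec_smul]; exact Submodule.smul_mem _ _ hy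
  -- all powers in S k
  have hall : ∀ m, (M ^ m) *ᵥ c ∈ S k := by
    intro m
    induction m with
    | zero =>
      rcases Nat.eq_zero_or_pos k with h | h
      · exact h ▸ hk
      · exact hmem k 0 h
    | succ m ih =>
      rw [pow_succ', ← Matrix.mulVec_mulVec]
      exact hinv _ ih
  apply le_antisymm
  · rw [Submodule.span_le]
    rintro x ⟨j, rfl⟩
    refine SetLike.le_def.mp ?_ (hall j)
    calc S k ≤ S N := hmono hkN
      _ ≤ _ := Submodule.span_le.mpr ?_
    rintro y ⟨j', hj', rfl⟩
    exact Submodule.subset_span ⟨⟨j', hj'⟩, rfl⟩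
  · exact Submodule.span_mono (by rintro x ⟨j, rfl⟩; exact ⟨(j : ℕ), rfl⟩)


lemma rank_eq_krylov (N : ℕ) (M : Matrix (Fin N) (Fin N) ℂ) (c : Fin N → ℂ) :
    (Matrix.of fun i j : Fin N => ((M ^ (j : ℕ)) *ᵥ c) i).rank =
      Module.finrank ℂ (Submodule.span ℂ (Set.range fun j : ℕ => (M ^ j) *ᵥ c)) := by
  rw [Matrix.rank_eq_finrank_span_cols, krylov_span]
  rfl


variable (N : ℕ) (M : Matrix (Fin (N+1)) (Fin (N+1)) ℂ)

def C0 : Matrix (Fin N) (Fin N) ℂ := Matrix.of fun k l => M k.succ l.succ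

def cv : Fin N → ℂ := fun k => M k.succ 0

def dl : Fin N → ℂ := fun k => M 0 k.succ

def e0 : Fin (N+1) → ℂ := Pi.single 0 1

def iota : (Fin N → ℂ) →ₗ[ℂ] (Fin (N+1) → ℂ) where
  toFun w := Fin.cons 0 w
  map_add' x y := by
    funext i
    refine Fin.cases ?_ ?_ i <;> simp
  map_smul' a x := by
    funext i
    refine Fin.cases ?_ ?_ i <;> simp

@[simp] lemma iota_apply_zero (w : Fin N → ℂ) : iota N w 0 = 0 := rfl

@[simp] lemma iota_apply_succ (w : Fin N → ℂ) (k : Fin N) : iota N w k.succ = w k := by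
  simp [iota]

lemma mulVec_iota (w : Fin N → ℂ) :
    M *ᵥ iota N w = (dl N M ⬝ᵥ w) • e0 N + iota N (C0 N M *ᵥ w) := by
  funext i
  refine Fin.cases ?_ ?_ i
  · simp [Matrix.mulVec, dotProduct, e0, Fin.sum_univ_succ, dl]
  · intro k
    simp [Matrix.mulVec, dotProduct, e0, Fin.sum_univ_succ, C0,
      Pi.single_apply, Fin.succ_ne_zero]

lemma mulVec_e0 : M *ᵥ e0 N = (M 0 0) • e0 N + iota N (cv N M) := by
  funext i
  refine Fin.cases ?_ ?_ i
  · simp [Matrix.mulVec, dotProduct, e0, Fin.sum_univ_succ, Pi.single_apply]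
  · intro k
    simp [Matrix.mulVec, dotProduct, e0, Fin.sum_univ_succ, cv,
      Pi.single_apply, Fin.succ_ne_zero]


lemma U_eq :
    Submodule.span ℂ (Set.range fun j : ℕ => (M ^ j) *ᵥ e0 N) =
      Submodule.span ℂ {e0 N} ⊔
        (Submodule.span ℂ (Set.range fun j : ℕ => ((C0 N M) ^ j) *ᵥ cv N M)).map (iota N) := by
  set K0 := Submodule.span ℂ (Set.range fun j : ℕ => ((C0 N M) ^ j) *ᵥ cv N M) with hK0
  set U := Submodule.span ℂ (Set.range fun j : ℕ => (M ^ j) *ᵥ e0 N) with hU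
  set R := Submodule.span ℂ {e0 N} ⊔ K0.map (iota N) with hR
  have he0R : e0 N ∈ R := le_sup_left (α := Submodule ℂ _) (a := Submodule.span ℂ {e0 N})
    (Submodule.mem_span_singleton_self _)
  have hcvK0 : cv N M ∈ K0 := by
    refine Submodule.subset_span ⟨0, ?_⟩; simp
  have hK0inv : ∀ w ∈ K0, (C0 N M) *ᵥ w ∈ K0 := by
    intro w hw
    induction hw using Submodule.span_induction with
    | mem y hy =>
      obtain ⟨j, rfl⟩ := hy
      rw [Matrix.mulVec_mulVec, ← pow_succ']
      exact Submodule.subset_span ⟨j + 1, rfl⟩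
    | zero => simp
    | add y z _ _ hy hz => rw [Matrix.mulVec_add]; exact Submodule.add_mem _ hy hz
    | smul a y _ hy => rw [Matrix.mulVec_smul]; exact Submodule.smul_mem _ _ hy
  have hRinv : ∀ x ∈ R, M *ᵥ x ∈ R := by
    intro x hx
    rw [hR] at hx
    obtain ⟨a, ha, b, hb, rfl⟩ := Submodule.mem_sup.mp hx
    obtain ⟨t, rfl⟩ := Submodule.mem_span_singleton.mp ha
    obtain ⟨w, hw, rfl⟩ := hb
    rw [Matrix.mulVec_add, Matrix.mulVec_smul, mulVec_e0, mulVec_iota]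
    refine Submodule.add_mem _ (Submodule.smul_mem _ _ ?_) ?_
    · exact Submodule.add_mem _ (Submodule.smul_mem _ _ he0R)
        (le_sup_right (α := Submodule ℂ _) (b := K0.map (iota N)) ⟨cv N M, hcvK0, rfl⟩)
    · exact Submodule.add_mem _ (Submodule.smul_mem _ _ he0R)
        (le_sup_right (α := Submodule ℂ _) (b := K0.map (iota N)) ⟨(C0 N M) *ᵥ w, hK0inv w hw, rfl⟩)
  have hUinv : ∀ x ∈ U, M *ᵥ x ∈ U := by
    intro x hx
    induction hx using Submodule.span_induction with
    | mem y hy =>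
      obtain ⟨j, rfl⟩ := hy
      rw [Matrix.mulVec_mulVec, ← pow_succ']
      exact Submodule.subset_span ⟨j + 1, rfl⟩
    | zero => simp
    | add y z _ _ hy hz => rw [Matrix.mulVec_add]; exact Submodule.add_mem _ hy hz
    | smul a y _ hy => rw [Matrix.mulVec_smul]; exact Submodule.smul_mem _ _ hy
  have he0U : e0 N ∈ U := by
    refine Submodule.subset_span ⟨0, ?_⟩; simp
  apply le_antisymm
  · rw [hU, Submodule.span_le]
    rintro x ⟨j, rfl⟩
    induction j with
    | zero => simpa using he0R
    | succ m ih =>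
      show (M ^ (m+1)) *ᵥ e0 N ∈ R
      rw [pow_succ', ← Matrix.mulVec_mulVec]
      exact hRinv _ ih
  · rw [hR]
    refine sup_le (Submodule.span_le.mpr ?_) (Submodule.map_le_iff_le_comap.mpr ?_)
    · intro x hx; rw [Set.mem_singleton_iff] at hx; exact hx ▸ he0U
    · intro w hw
      induction hw using Submodule.span_induction with
      | mem y hy =>
        obtain ⟨j, rfl⟩ := hy
        rw [Submodule.mem_comap]
        induction j with
        | zero =>
          have h1 : iota N (cv N M) = M *ᵥ e0 N - (M 0 0) • e0 N := by
            rw [mulVec_e0]; abel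
          simpa [h1] using Submodule.sub_mem _ (hUinv _ he0U) (Submodule.smul_mem _ _ he0U)
        | succ m ih =>
          have h1 : iota N ((C0 N M ^ (m+1)) *ᵥ cv N M) =
              M *ᵥ iota N ((C0 N M ^ m) *ᵥ cv N M) -
                (dl N M ⬝ᵥ ((C0 N M ^ m) *ᵥ cv N M)) • e0 N := by
            rw [mulVec_iota, Matrix.mulVec_mulVec, ← pow_succ']; abel
          rw [h1]
          exact Submodule.sub_mem _ (hUinv _ ih) (Submodule.smul_mem _ _ he0U)
      | zero => simp
      | add y z _ _ hy hz =>
        rw [Submodule.mem_comap, map_add]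
        exact Submodule.add_mem _ hy hz
      | smul a y _ hy =>
        rw [Submodule.mem_comap] at hy ⊢
        rw [LinearMap.map_smul]
        exact Submodule.smul_mem _ _ hy


lemma e0_ne_zero : e0 N ≠ 0 := by
  intro h
  have := congrFun h 0
  simp [e0] at this

lemma iota_injective : Function.Injective (iota N) := by
  intro x y h
  funext k
  have := congrFun h k.succ
  simpa using this

lemma finrank_U :
    Module.finrank ℂ (Submodule.span ℂ (Set.range fun j : ℕ => (M ^ j) *ᵥ e0 N)) =
      Module.finrank ℂ
        (Submodule.span ℂ (Set.range fun j : ℕ => ((C0 N M) ^ j) *ᵥ cv N M)) + 1 := by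
  rw [U_eq]
  set K0 := Submodule.span ℂ (Set.range fun j : ℕ => ((C0 N M) ^ j) *ᵥ cv N M) with hK0
  set E := Submodule.span ℂ {e0 N} with hE
  have hdisj : E ⊓ K0.map (iota N) = ⊥ := by
    rw [eq_bot_iff]
    rintro x ⟨hx1, hx2⟩
    obtain ⟨t, rfl⟩ := Submodule.mem_span_singleton.mp hx1
    obtain ⟨w, hw, hww⟩ := hx2
    have h0 : t = 0 := by
      have := congrFun hww 0
      simpa [e0, eq_comm] using this
    simp [h0]
  have h1 := Submodule.finrank_sup_add_finrank_inf_eq E (K0.map (iota N))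
  rw [hdisj] at h1
  simp only [finrank_bot, add_zero] at h1
  rw [h1, finrank_span_singleton (e0_ne_zero N)]
  have h2 : Module.finrank ℂ (K0.map (iota N)) = Module.finrank ℂ K0 :=
    (Submodule.equivMapOfInjective (iota N) (iota_injective N) K0).symm.finrank_eq
  rw [h2, add_comm]


lemma diagonal_isSemisimple {m : ℕ} (dv : Fin m → ℂ) :
    Module.End.IsSemisimple (Matrix.mulVecLin (Matrix.diagonal dv)) := by
  classical
  set p : Polynomial ℂ := ∏ μ ∈ Finset.image dv Finset.univ, (X - Polynomial.C μ) with hp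
  have hsf : Squarefree p := by
    refine Polynomial.Separable.squarefree ?_
    exact (Polynomial.separable_prod_X_sub_C_iff' (f := id)
      (s := Finset.image dv Finset.univ)).mpr (fun x _ y _ h => h)
  refine Module.End.isSemisimple_of_squarefree_aeval_eq_zero hsf ?_
  have h1 : Matrix.mulVecLin (Matrix.diagonal dv) =
      Matrix.toLinAlgEquiv'.toAlgHom (Matrix.diagonal dv) := rfl
  rw [h1, Polynomial.aeval_algHom_apply]
  have h2 : Matrix.diagonal dv = Matrix.diagonalAlgHom ℂ dv := rfl
  rw [h2, Polynomial.aeval_algHom_apply]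
  have h3 : Polynomial.aeval dv p = 0 := by
    funext i
    have h4 : Polynomial.aeval dv p i = Polynomial.aeval (dv i) p :=
      (Polynomial.aeval_algHom_apply (Pi.evalAlgHom ℂ (fun _ => ℂ) i) dv p).symm
    rw [h4, hp]
    rw [map_prod]
    refine Finset.prod_eq_zero (Finset.mem_image.mpr ⟨i, Finset.mem_univ i, rfl⟩) ?_
    simp
  rw [h3]
  simp only [map_zero]

lemma mulVecLin_isSemisimple {m : ℕ} (A : Matrix (Fin m) (Fin m) ℂ)
    (hss : ∃ P : Matrix (Fin m) (Fin m) ℂ, IsUnit P.det ∧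
      ∃ dv : Fin m → ℂ, A = P * Matrix.diagonal dv * P⁻¹) :
    Module.End.IsSemisimple (Matrix.mulVecLin A) := by
  obtain ⟨P, hP, dv, hA⟩ := hss
  haveI hinv := P.invertibleOfIsUnitDet hP
  have he : ((P.toLinearEquiv' hinv).symm : (Fin m → ℂ) ≃ₗ[ℂ] (Fin m → ℂ)) ∘ₗ A.mulVecLin =
      (Matrix.diagonal dv).mulVecLin ∘ₗ
        ((P.toLinearEquiv' hinv).symm : (Fin m → ℂ) ≃ₗ[ℂ] (Fin m → ℂ)) := by
    refine LinearMap.ext fun v => ?_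
    have h1 : ⇑((P.toLinearEquiv' hinv).symm) = fun w => (⅟P) *ᵥ w := by
      have := Matrix.toLinearEquiv'_symm_apply P hinv
      funext w
      calc ((P.toLinearEquiv' hinv).symm) w
          = (((P.toLinearEquiv' hinv).symm : Module.End ℂ (Fin m → ℂ))) w := rfl
        _ = Matrix.toLin' (⅟ P) w := by rw [this]
        _ = (⅟P) *ᵥ w := Matrix.toLin'_apply _ _
    have hM : ⅟P * A = Matrix.diagonal dv * ⅟P := by
      rw [hA, ← Matrix.invOf_eq_nonsing_inv]
      calc ⅟P * (P * Matrix.diagonal dv * ⅟P) = ⅟P * P * Matrix.diagonal dv * ⅟P := by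
            rw [Matrix.mul_assoc, Matrix.mul_assoc, Matrix.mul_assoc]
        _ = Matrix.diagonal dv * ⅟P := by rw [invOf_mul_self, Matrix.one_mul]
    simp only [LinearMap.coe_comp, LinearEquiv.coe_coe, Function.comp_apply, h1,
      Matrix.mulVecLin_apply, Matrix.mulVec_mulVec, hM]
  exact (LinearEquiv.isSemisimple_iff _ _ _ he).mpr (diagonal_isSemisimple dv)


lemma span_eig_eq_K {m : ℕ} (A : Matrix (Fin (m+1)) (Fin (m+1)) ℂ)
    (hf : Module.End.IsSemisimple A.mulVecLin) :
    Submodule.span ℂ {v : Fin (m+1) → ℂ | v ≠ 0 ∧ (∃ μ : ℂ, A *ᵥ v = μ • v) ∧ v 0 = 0} =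
      ⨅ j : ℕ, LinearMap.ker
        ((LinearMap.proj 0 : (Fin (m+1) → ℂ) →ₗ[ℂ] ℂ) ∘ₗ (A.mulVecLin ^ j)) := by
  set f := A.mulVecLin with hfdef
  set K := ⨅ j : ℕ, LinearMap.ker
    ((LinearMap.proj 0 : (Fin (m+1) → ℂ) →ₗ[ℂ] ℂ) ∘ₗ (f ^ j)) with hK
  have hmemK : ∀ v, v ∈ K ↔ ∀ j : ℕ, ((f ^ j) v) 0 = 0 := by
    intro v
    simp [hK, Submodule.mem_iInf, LinearMap.mem_ker]
  apply le_antisymm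
  · rw [Submodule.span_le]
    rintro v ⟨hv0, ⟨μ, hμ⟩, h0⟩
    rw [SetLike.mem_coe, hmemK]
    intro j
    have hpow : ∀ j : ℕ, (f ^ j) v = μ ^ j • v := by
      intro j
      induction j with
      | zero => simp
      | succ i ih =>
        rw [pow_succ, Module.End.mul_apply]
        have hfv : f v = μ • v := hμ
        rw [hfv, LinearMap.map_smul, ih, smul_smul, ← pow_succ']
    rw [hpow j]
    simp [h0]
  · have hKinv : K ∈ Module.End.invtSubmodule f := by
      rw [Module.End.mem_invtSubmodule]
      intro v hv
      rw [Submodule.mem_comap, hmemK]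
      intro j
      have := (hmemK v).mp hv (j + 1)
      rwa [pow_succ, Module.End.mul_apply] at this
    have hmaps : ∀ x ∈ K, f x ∈ K := fun x hx => hKinv hx
    set g := f.restrict hmaps with hg
    have hgss : Module.End.IsSemisimple g := hf.restrict hKinv
    have htop : ⨆ μ : ℂ, Module.End.eigenspace g μ = ⊤ := by
      have h1 := Module.End.iSup_maxGenEigenspace_eq_top g
      have h2 : ∀ μ : ℂ, Module.End.maxGenEigenspace g μ = Module.End.eigenspace g μ :=
        hgss.isFinitelySemisimple.maxGenEigenspace_eq_eigenspace
      simp_rw [h2] at h1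
      exact h1
    intro v hv
    have hmem : v ∈ Submodule.map K.subtype (⨆ μ : ℂ, Module.End.eigenspace g μ) := by
      rw [htop]
      exact ⟨⟨v, hv⟩, trivial, rfl⟩
    rw [Submodule.map_iSup] at hmem
    refine SetLike.le_def.mp (iSup_le fun μ => ?_) hmem
    rintro x ⟨y, hy, rfl⟩
    rcases eq_or_ne (y : Fin (m+1) → ℂ) 0 with h | h
    · simp only [Submodule.coe_subtype, h]
      exact Submodule.zero_mem _
    · refine Submodule.subset_span ⟨h, ⟨μ, ?_⟩, ?_⟩
      · have h1 := Module.End.mem_eigenspace_iff.mp hy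
        have h2 := congrArg Subtype.val h1
        rw [LinearMap.restrict_apply] at h2
        simpa [hfdef] using h2
      · have := (hmemK _).mp y.2 0
        simpa using this


lemma mulVecLin_pow {m : ℕ} (A : Matrix (Fin m) (Fin m) ℂ) (j : ℕ) :
    (A.mulVecLin) ^ j = (A ^ j).mulVecLin := by
  induction j with
  | zero =>
    rw [pow_zero, pow_zero, Matrix.mulVecLin_one]
    rfl
  | succ i ih =>
    rw [pow_succ, pow_succ, Matrix.mulVecLin_mul, ih]
    rfl

lemma dot_identity {m : ℕ} (A : Matrix (Fin (m+1)) (Fin (m+1)) ℂ) (j : ℕ)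
    (v : Fin (m+1) → ℂ) : ((Aᵀ ^ j) *ᵥ e0 m) ⬝ᵥ v = ((A ^ j) *ᵥ v) 0 := by
  rw [← Matrix.transpose_pow, Matrix.mulVec_transpose, ← Matrix.dotProduct_mulVec]
  simp [e0, dotProduct, Pi.single_apply]

lemma K_eq_dualCoann {m : ℕ} (A : Matrix (Fin (m+1)) (Fin (m+1)) ℂ) :
    (⨅ j : ℕ, LinearMap.ker
        ((LinearMap.proj 0 : (Fin (m+1) → ℂ) →ₗ[ℂ] ℂ) ∘ₗ (A.mulVecLin ^ j))) =
      Submodule.dualCoannihilator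
        ((Submodule.span ℂ (Set.range fun j : ℕ => ((Aᵀ) ^ j) *ᵥ e0 m)).map
          ((Module.piEquiv (Fin (m+1)) ℂ ℂ).toLinearMap :
            (Fin (m+1) → ℂ) →ₗ[ℂ] Module.Dual ℂ (Fin (m+1) → ℂ))) := by
  ext v
  rw [Submodule.mem_dualCoannihilator, Submodule.mem_iInf]
  constructor
  · intro h φ hφ
    obtain ⟨u, hu, rfl⟩ := hφ
    induction hu using Submodule.span_induction with
    | mem y hy =>
      obtain ⟨j, rfl⟩ := hy
      rw [LinearEquiv.coe_coe, Module.piEquiv_apply_apply]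
      have h1 := h j
      rw [LinearMap.mem_ker, LinearMap.comp_apply, mulVecLin_pow] at h1
      have h2 : ((Aᵀ ^ j) *ᵥ e0 m) ⬝ᵥ v = 0 := by
        rw [dot_identity]
        exact h1
      rw [← h2]
      simp [dotProduct, mul_comm]
    | zero => simp
    | add y z _ _ hy hz => rw [map_add, LinearMap.add_apply, hy, hz, add_zero]
    | smul a y _ hy => rw [_root_.map_smul, LinearMap.smul_apply, hy, smul_zero]
  · intro h j
    rw [LinearMap.mem_ker, LinearMap.comp_apply, mulVecLin_pow]
    have h1 := h (Module.piEquiv (Fin (m+1)) ℂ ℂ ((Aᵀ ^ j) *ᵥ e0 m))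
      ⟨_, Submodule.subset_span ⟨j, rfl⟩, rfl⟩
    rw [Module.piEquiv_apply_apply] at h1
    have h2 : ((Aᵀ ^ j) *ᵥ e0 m) ⬝ᵥ v = 0 := by
      rw [← h1]
      simp [dotProduct, mul_comm]
    rw [dot_identity] at h2
    exact h2


lemma finrank_K {m : ℕ} (A : Matrix (Fin (m+1)) (Fin (m+1)) ℂ) :
    Module.finrank ℂ ((⨅ j : ℕ, LinearMap.ker
        ((LinearMap.proj 0 : (Fin (m+1) → ℂ) →ₗ[ℂ] ℂ) ∘ₗ (A.mulVecLin ^ j))) :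
          Submodule ℂ (Fin (m+1) → ℂ)) +
      Module.finrank ℂ
        (Submodule.span ℂ (Set.range fun j : ℕ => ((Aᵀ) ^ j) *ᵥ e0 m)) = m + 1 := by
  rw [K_eq_dualCoann]
  set U := Submodule.span ℂ (Set.range fun j : ℕ => ((Aᵀ) ^ j) *ᵥ e0 m) with hU
  have h1 := Subspace.finrank_add_finrank_dualCoannihilator_eq
    (U.map ((Module.piEquiv (Fin (m+1)) ℂ ℂ).toLinearMap :
      (Fin (m+1) → ℂ) →ₗ[ℂ] Module.Dual ℂ (Fin (m+1) → ℂ)))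
  have h2 : Module.finrank ℂ (U.map ((Module.piEquiv (Fin (m+1)) ℂ ℂ).toLinearMap :
      (Fin (m+1) → ℂ) →ₗ[ℂ] Module.Dual ℂ (Fin (m+1) → ℂ))) =
      Module.finrank ℂ U := LinearEquiv.finrank_map_eq _ _
  rw [h2, Module.finrank_pi] at h1
  simp only [Fintype.card_fin] at h1
  omega

end Stmt10Aux

open Stmt10Aux in
/-- for a semisimple (diagonalizable) `C ∈ M_r(ℂ)`, `r = n+2`, with
`ᵗC = [[γ, ᵗδ],[c, C₀]]` and `D = (c, C₀c, …, C₀^{r−2}c)`, the span `W` of all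
eigenvectors of `C` whose first entry is zero satisfies `dim W = r − 1 − rank D`. -/
theorem stmt10 (n : ℕ) (C : Matrix (Fin (n+2)) (Fin (n+2)) ℂ)
    (hss : ∃ P : Matrix (Fin (n+2)) (Fin (n+2)) ℂ, IsUnit P.det ∧
      ∃ dv : Fin (n+2) → ℂ, C = P * Matrix.diagonal dv * P⁻¹) :
    Module.finrank ℂ
      (Submodule.span ℂ {v : Fin (n+2) → ℂ |
        v ≠ 0 ∧ (∃ μ : ℂ, C *ᵥ v = μ • v) ∧ v 0 = 0}) =
    (n + 1) -
      (Matrix.of fun i j : Fin (n+1) =>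
        (((Matrix.of fun k l : Fin (n+1) => Cᵀ k.succ l.succ) ^ (j : ℕ)) *ᵥ
          (fun k : Fin (n+1) => Cᵀ k.succ 0)) i).rank := by
  have hssC : Module.End.IsSemisimple (Matrix.mulVecLin C) := mulVecLin_isSemisimple C hss
  have hspan : Submodule.span ℂ {v : Fin (n+2) → ℂ |
        v ≠ 0 ∧ (∃ μ : ℂ, C *ᵥ v = μ • v) ∧ v 0 = 0} =
      (⨅ j : ℕ, LinearMap.ker
        ((LinearMap.proj 0 : (Fin (n+2) → ℂ) →ₗ[ℂ] ℂ) ∘ₗ (C.mulVecLin ^ j))) :=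
    span_eig_eq_K (m := n+1) C hssC
  rw [hspan]
  have hK : Module.finrank ℂ ((⨅ j : ℕ, LinearMap.ker
        ((LinearMap.proj 0 : (Fin (n+2) → ℂ) →ₗ[ℂ] ℂ) ∘ₗ (C.mulVecLin ^ j))) :
          Submodule ℂ (Fin (n+2) → ℂ)) +
      Module.finrank ℂ (Submodule.span ℂ
        (Set.range fun j : ℕ => ((Cᵀ) ^ j) *ᵥ e0 (n+1)) : Submodule ℂ (Fin (n+2) → ℂ)) =
        n + 2 :=
    finrank_K (m := n+1) C
  have h3 : Module.finrank ℂ (Submodule.span ℂ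
        (Set.range fun j : ℕ => ((Cᵀ) ^ j) *ᵥ e0 (n+1)) : Submodule ℂ (Fin (n+2) → ℂ)) =
      Module.finrank ℂ (Submodule.span ℂ
        (Set.range fun j : ℕ => ((C0 (n+1) Cᵀ) ^ j) *ᵥ cv (n+1) Cᵀ)) + 1 :=
    finrank_U (n+1) Cᵀ
  have h4 : (Matrix.of fun i j : Fin (n+1) =>
        (((Matrix.of fun k l : Fin (n+1) => Cᵀ k.succ l.succ) ^ (j : ℕ)) *ᵥ
          (fun k : Fin (n+1) => Cᵀ k.succ 0)) i).rank =
      Module.finrank ℂ (Submodule.span ℂ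
        (Set.range fun j : ℕ => ((C0 (n+1) Cᵀ) ^ j) *ᵥ cv (n+1) Cᵀ)) :=
    rank_eq_krylov (n+1) (C0 (n+1) Cᵀ) (cv (n+1) Cᵀ)
  rw [h4]
  omega
end
end

section
/- Let a₁, …, a_{d+2} be distinct complex numbers and set c_α = ∏_{ρ≠α}(a_α − a_ρ)⁻¹ for α = 1, …, d+2. Define φ : M(r,d) → M_r(ℂ)^{d+2} by φ(A(x)) = (c₁A(a₁), …, c_{d+2}A(a_{d+2})). Then φ is injective, and a tuple (Y₁, …, Y_{d+2}) ∈ M_r(ℂ)^{d+2} lies in the image of φ if and only if the following linear conditions hold: Σ_{α=1}^{d+2} (Y_α)_{11} = 0; Σ_{α=1}^{d+2} (Y_α)_{j1} = 0 and Σ_{α=1}^{d+2} a_α (Y_α)_{j1} = 0 for all 2 ≤ j ≤ r; and Σ_{α=1}^{d+2} (Y_α)_{ji} = 0 for all 2 ≤ i, j ≤ r. -/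
/-! For `n + 2` distinct nodes `v i`, Lagrange interpolation identifies polynomials of degree
`≤ n + 1` with their value vectors, and the coefficient of `x ^ (n + 1)` of such a `p` is
`∑ᵢ cᵢ p(vᵢ)`. Hence `∑ᵢ cᵢ p(vᵢ) = 0` cuts out degree `≤ n`, and the same applied to `x p`
shows that `∑ᵢ vᵢ cᵢ p(vᵢ) = 0` lowers the degree once more. Every entry of a matrix in `M(r,d)`
has degree `≤ d + 1`, and the degree bounds defining `M(r,d)` are, entry by entry, exactly these
vanishing conditions. -/

open Polynomial Matrix

noncomputable section

open Finset Lagrange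

namespace Polynomial

variable {R : Type*} [Semiring R] {p : R[X]} {n : ℕ}

theorem degree_le_iff_coeff_succ_eq_zero (hp : p.degree ≤ ↑(n + 1)) :
    p.degree ≤ n ↔ p.coeff (n + 1) = 0 := by
  refine ⟨fun h => coeff_eq_zero_of_degree_lt (h.trans_lt (by exact_mod_cast n.lt_succ_self)),
    fun h => ?_⟩
  rw [degree_le_iff_coeff_zero] at hp ⊢
  intro m hm
  rcases eq_or_lt_of_le (Order.add_one_le_of_lt (WithBot.coe_lt_coe.mp hm)) with rfl | hm'
  · exact h
  · exact hp m (by exact_mod_cast hm')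

theorem degree_X_mul_le_iff [Nontrivial R] : (X * p).degree ≤ ↑(n + 1) ↔ p.degree ≤ n := by
  rw [X_mul, degree_mul_X, Nat.cast_add, Nat.cast_one]
  exact WithBot.add_le_add_iff_right (by simp)

end Polynomial

namespace Lagrange

variable {F ι : Type*} [Field F] [DecidableEq ι] {s : Finset ι} {v : ι → F}

theorem prod_erase_sub_ne_zero (hvs : Set.InjOn v s) {i : ι} (hi : i ∈ s) :
    ∏ j ∈ s.erase i, (v i - v j) ≠ 0 := by
  simpa [nodalWeight, prod_inv_distrib] using nodalWeight_ne_zero hvs hi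

theorem degree_le_iff_sum_eq_zero (hvs : Set.InjOn v s) {n : ℕ} (hs : #s = n + 2) {p : F[X]}
    (hp : p.degree ≤ ↑(n + 1)) :
    p.degree ≤ n ↔ ∑ i ∈ s, (∏ j ∈ s.erase i, (v i - v j))⁻¹ * p.eval (v i) = 0 := by
  have hp' : p.degree < #s := hp.trans_lt (by rw [hs]; exact_mod_cast (n + 1).lt_succ_self)
  simp_rw [← div_eq_inv_mul, ← coeff_eq_sum hvs hp', hs]
  exact degree_le_iff_coeff_succ_eq_zero hp

theorem degree_le_sub_one_iff_sums_eq_zero (hvs : Set.InjOn v s) {n : ℕ} (hn : 1 ≤ n)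
    (hs : #s = n + 2) {p : F[X]} (hp : p.degree ≤ ↑(n + 1)) :
    p.degree ≤ ↑(n - 1) ↔
      ∑ i ∈ s, (∏ j ∈ s.erase i, (v i - v j))⁻¹ * p.eval (v i) = 0 ∧
      ∑ i ∈ s, v i * ((∏ j ∈ s.erase i, (v i - v j))⁻¹ * p.eval (v i)) = 0 := by
  obtain ⟨m, rfl⟩ := Nat.exists_eq_add_of_le' hn
  have hXp : ∀ i, v i * ((∏ j ∈ s.erase i, (v i - v j))⁻¹ * p.eval (v i)) =
      (∏ j ∈ s.erase i, (v i - v j))⁻¹ * (X * p).eval (v i) := fun i => by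
    rw [eval_mul, eval_X]; ring
  simp_rw [hXp, Nat.add_sub_cancel]
  rw [← degree_le_iff_sum_eq_zero hvs hs hp]
  constructor
  · intro h
    have h' : p.degree ≤ ↑(m + 1) := h.trans (by exact_mod_cast m.le_succ)
    exact ⟨h', (degree_le_iff_sum_eq_zero hvs hs (degree_X_mul_le_iff.mpr h')).mp
      (degree_X_mul_le_iff.mpr h)⟩
  · rintro ⟨h, hX⟩
    exact degree_X_mul_le_iff.mp
      ((degree_le_iff_sum_eq_zero hvs hs (degree_X_mul_le_iff.mpr h)).mpr hX)

theorem eq_of_inv_mul_eval_eq (hvs : Set.InjOn v s) {n : ℕ} (hs : #s = n + 2) {p q : F[X]}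
    (hp : p.degree ≤ ↑(n + 1)) (hq : q.degree ≤ ↑(n + 1))
    (h : ∀ i ∈ s, (∏ j ∈ s.erase i, (v i - v j))⁻¹ * p.eval (v i) =
      (∏ j ∈ s.erase i, (v i - v j))⁻¹ * q.eval (v i)) : p = q := by
  refine eq_of_degrees_lt_of_eval_index_eq _ hvs (by rw [hs]; exact Order.lt_succ_of_le hp)
    (by rw [hs]; exact Order.lt_succ_of_le hq) fun i hi => ?_
  exact mul_left_cancel₀ (inv_ne_zero (prod_erase_sub_ne_zero hvs hi)) (h i hi)

theorem exists_degree_le_inv_mul_eval_eq (hvs : Set.InjOn v s) {n : ℕ} (hs : #s = n + 2)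
    (y : ι → F) : ∃ p : F[X], p.degree ≤ ↑(n + 1) ∧
      ∀ i ∈ s, (∏ j ∈ s.erase i, (v i - v j))⁻¹ * p.eval (v i) = y i := by
  have hdeg := degree_interpolate_lt (fun i => (∏ j ∈ s.erase i, (v i - v j)) * y i) hvs
  rw [hs] at hdeg
  refine ⟨_, Order.le_of_lt_succ hdeg, fun i hi => ?_⟩
  rw [eval_interpolate_at_node _ hvs hi, inv_mul_cancel_left₀ (prod_erase_sub_ne_zero hvs hi)]

end Lagrange

theorem Mrd.degree_le {n d : ℕ} {A : Matrix (Fin (n + 2)) (Fin (n + 2)) ℂ[X]} (hA : Mrd n d A)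
    (i j : Fin (n + 2)) : (A i j).degree ≤ ↑(d + 1) := by
  obtain ⟨h00, h0j, hj0, hij⟩ := hA
  induction i using Fin.cases <;> induction j using Fin.cases
  · exact h00.trans (by exact_mod_cast d.le_succ)
  · exact h0j _
  · exact (hj0 _).trans (by exact_mod_cast (d.sub_le 1).trans d.le_succ)
  · exact (hij _ _).trans (by exact_mod_cast d.le_succ)

/-- for distinct `a₁, …, a_{d+2}` and `c_α = ∏_{ρ≠α}(a_α − a_ρ)⁻¹`, the map
`φ(A(x)) = (c₁A(a₁), …, c_{d+2}A(a_{d+2}))` is injective on `M(r,d)`, and its image is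
cut out by the stated linear conditions. -/
theorem stmt12 (n d : ℕ) (hd : 1 ≤ d)
    (a : Fin (d+2) → ℂ) (ha : Function.Injective a) :
    (∀ A B : Matrix (Fin (n+2)) (Fin (n+2)) (Polynomial ℂ), Mrd n d A → Mrd n d B →
      (fun α => (∏ ρ ∈ Finset.univ.erase α, (a α - a ρ))⁻¹ • A.map (eval (a α))) =
      (fun α => (∏ ρ ∈ Finset.univ.erase α, (a α - a ρ))⁻¹ • B.map (eval (a α))) →
      A = B) ∧
    (∀ Y : Fin (d+2) → Matrix (Fin (n+2)) (Fin (n+2)) ℂ,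
      (∃ A : Matrix (Fin (n+2)) (Fin (n+2)) (Polynomial ℂ), Mrd n d A ∧
        (fun α => (∏ ρ ∈ Finset.univ.erase α, (a α - a ρ))⁻¹ • A.map (eval (a α))) = Y) ↔
      ((∑ α, Y α 0 0 = 0) ∧
       (∀ j : Fin (n+1), ∑ α, Y α j.succ 0 = 0) ∧
       (∀ j : Fin (n+1), ∑ α, a α * Y α j.succ 0 = 0) ∧
       (∀ i j : Fin (n+1), ∑ α, Y α j.succ i.succ = 0))) := by
  have hinj : Set.InjOn a (univ : Finset (Fin (d + 2))) := ha.injOn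
  have hcard : #(univ : Finset (Fin (d + 2))) = d + 2 := card_fin _
  refine ⟨fun A B hA hB hAB => ?_, fun Y => ⟨?_, ?_⟩⟩
  · exact Matrix.ext fun i j => eq_of_inv_mul_eval_eq hinj hcard (hA.degree_le i j)
      (hB.degree_le i j) fun α _ => congr_fun (congr_fun (congr_fun hAB α) i) j
  · rintro ⟨A, hA, rfl⟩
    have hsum := fun i j => degree_le_iff_sum_eq_zero hinj hcard (hA.degree_le i j)
    have hsum' := fun j : Fin (n + 1) =>
      degree_le_sub_one_iff_sums_eq_zero hinj hd hcard (hA.degree_le j.succ 0)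
    obtain ⟨h00, -, hj0, hij⟩ := hA
    simp only [Matrix.smul_apply, Matrix.map_apply, smul_eq_mul]
    exact ⟨(hsum 0 0).1 h00, fun j => ((hsum' j).1 (hj0 j)).1, fun j => ((hsum' j).1 (hj0 j)).2,
      fun i j => (hsum _ _).1 (hij j i)⟩
  · rintro ⟨h00, hj0, hj0', hij⟩
    choose P hP hPeval using fun i j =>
      exists_degree_le_inv_mul_eval_eq hinj hcard fun α => Y α i j
    simp only [mem_univ, forall_const] at hPeval
    simp only [← hPeval] at h00 hj0 hj0' hij
    refine ⟨Matrix.of P, ⟨?_, fun j => hP _ _, fun i => ?_, fun i j => ?_⟩, ?_⟩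
    · exact (degree_le_iff_sum_eq_zero hinj hcard (hP 0 0)).2 h00
    · exact (degree_le_sub_one_iff_sums_eq_zero hinj hd hcard (hP _ _)).2 ⟨hj0 i, hj0' i⟩
    · exact (degree_le_iff_sum_eq_zero hinj hcard (hP _ _)).2 (hij j i)
    · funext α
      ext i j
      exact hPeval i j α
end
end

section
/- Let A(x) ∈ M(r,d), a ∈ ℂ and p ≥ 1 an integer. Then there exists a unique matrix X(x) ∈ M_r(ℂ[x]) such that (x−a)·X(x) = A(a)^p·A(x) − A(x)·A(a)^p (where A(a)^p is regarded as a constant polynomial matrix), and moreover X(x) ∈ M(r,d), i.e., X satisfies the same degree bounds: deg X_{11} ≤ d, deg X_{1j} ≤ d+1, deg X_{j1} ≤ d−1 for 2 ≤ j ≤ r, and deg X_{ij} ≤ d for 2 ≤ i,j ≤ r. (This X(x) is the value Υ_a^{(p)}(A(x)) of the Lax vector field at A(x).) -/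
open Polynomial Matrix

noncomputable section

private lemma withbot_lt_succ {x : WithBot ℕ} {k : ℕ} (h : x < ((k+1:ℕ) : WithBot ℕ)) :
    x ≤ (k : WithBot ℕ) := by
  cases x with
  | bot => exact bot_le
  | coe m =>
      rw [Nat.cast_withBot] at h ⊢
      exact WithBot.coe_le_coe.mpr (Nat.lt_succ_iff.mp (WithBot.coe_lt_coe.mp h))

private lemma deg_div_aux (q : Polynomial ℂ) (a : ℂ) (k : ℕ)
    (h : q.degree ≤ ((k+1 : ℕ) : WithBot ℕ)) :
    (q /ₘ (Polynomial.X - Polynomial.C a)).degree ≤ (k : WithBot ℕ) := by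
  by_cases h0 : q = 0
  · simp [h0]
  · have hlt := Polynomial.degree_divByMonic_lt q (Polynomial.X - Polynomial.C a) h0
      (by rw [Polynomial.degree_X_sub_C]; exact zero_lt_one)
    exact withbot_lt_succ (lt_of_lt_of_le hlt h)

/-- the Lax vector field `Υ_a^{(p)}` is well defined on `M(r,d)`: there is a
unique polynomial matrix `X(x)` with `(x−a)·X(x) = [A(a)^p, A(x)]`, and it lies in
`M(r,d)`. -/
theorem stmt13 (n d : ℕ) (hd : 1 ≤ d)
    (A : Matrix (Fin (n+2)) (Fin (n+2)) (Polynomial ℂ)) (hA : Mrd n d A)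
    (a : ℂ) (p : ℕ) (hp : 1 ≤ p) :
    ∃ Xm : Matrix (Fin (n+2)) (Fin (n+2)) (Polynomial ℂ),
      ((Polynomial.X - Polynomial.C a) • Xm =
        ((A.map (eval a) ^ p).map Polynomial.C) * A -
          A * ((A.map (eval a) ^ p).map Polynomial.C)) ∧
      Mrd n d Xm ∧
      (∀ Y : Matrix (Fin (n+2)) (Fin (n+2)) (Polynomial ℂ),
        (Polynomial.X - Polynomial.C a) • Y =
          ((A.map (eval a) ^ p).map Polynomial.C) * A -
            A * ((A.map (eval a) ^ p).map Polynomial.C) → Y = Xm) := by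
  classical
  set M : Matrix (Fin (n+2)) (Fin (n+2)) (Polynomial ℂ) :=
    (A.map (eval a) ^ p).map Polynomial.C with hMdef
  set B : Matrix (Fin (n+2)) (Fin (n+2)) (Polynomial ℂ) := M * A - A * M with hBdef
  -- M entries are constants
  have hMC : ∀ i j, M i j = Polynomial.C ((A.map (eval a) ^ p) i j) := fun i j => rfl
  -- root at a
  have hroot : ∀ i j, (B i j).eval a = 0 := by
    intro i j
    have h1 : (B i j).eval a = (A.map (eval a) ^ p * A.map (eval a)) i j
        - (A.map (eval a) * A.map (eval a) ^ p) i j := by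
      simp [hBdef, Matrix.sub_apply, Matrix.mul_apply, Polynomial.eval_finset_sum,
        hMC, Matrix.map_apply]
    rw [h1, ← pow_succ, ← pow_succ', sub_self]
  -- the candidate
  set Xm : Matrix (Fin (n+2)) (Fin (n+2)) (Polynomial ℂ) :=
    B.map (fun q => q /ₘ (Polynomial.X - Polynomial.C a)) with hXmdef
  have hdiv : ∀ i j, (Polynomial.X - Polynomial.C a) * Xm i j = B i j := by
    intro i j
    have h1 := Polynomial.modByMonic_add_div (B i j) (Polynomial.X - Polynomial.C a)
    rw [Polynomial.modByMonic_X_sub_C_eq_C_eval, hroot, map_zero, zero_add] at h1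
    exact h1
  have heq : (Polynomial.X - Polynomial.C a) • Xm = M * A - A * M := by
    ext i j
    simp only [Matrix.smul_apply, smul_eq_mul, hdiv i j, hBdef, Matrix.sub_apply]
  -- degree bounds for B
  obtain ⟨hA1, hA2, hA3, hA4⟩ := hA
  set rb : Fin (n+2) → ℕ := fun i => if i = 0 then d+1 else d with hrb
  set cb : Fin (n+2) → ℕ := fun j => if j = 0 then d else d+1 with hcb
  have hArow : ∀ i k, (A i k).degree ≤ (rb i : WithBot ℕ) := by
    intro i k
    refine Fin.cases ?_ (fun i => ?_) i <;> refine Fin.cases ?_ (fun k => ?_) k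
    · simpa [hrb] using hA1.trans (by exact_mod_cast Nat.le_succ d)
    · simpa [hrb] using hA2 k
    · simp only [hrb, hcb]
      have : (Fin.succ i : Fin (n+2)) ≠ 0 := Fin.succ_ne_zero i
      simp only [this, if_neg, if_false]
      exact (hA3 i).trans (by exact_mod_cast Nat.sub_le d 1)
    · have : (Fin.succ i : Fin (n+2)) ≠ 0 := Fin.succ_ne_zero i
      simp only [hrb, this, if_false]
      exact hA4 i k
  have hAcol : ∀ j k, (A k j).degree ≤ (cb j : WithBot ℕ) := by
    intro j k
    refine Fin.cases ?_ (fun j => ?_) j <;> refine Fin.cases ?_ (fun k => ?_) k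
    · simpa [hcb] using hA1
    · simpa [hcb] using (hA3 k).trans (by exact_mod_cast Nat.sub_le d 1)
    · have : (Fin.succ j : Fin (n+2)) ≠ 0 := Fin.succ_ne_zero j
      simp only [hcb, this, if_false]
      exact hA2 j
    · have : (Fin.succ j : Fin (n+2)) ≠ 0 := Fin.succ_ne_zero j
      simp only [hcb, this, if_false]
      exact (hA4 k j).trans (by exact_mod_cast Nat.le_succ d)
  have hBdeg : ∀ i j, (B i j).degree ≤ ((max (rb i) (cb j) : ℕ) : WithBot ℕ) := by
    intro i j
    rw [hBdef]
    simp only [Matrix.sub_apply, Matrix.mul_apply]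
    refine (Polynomial.degree_sub_le _ _).trans (max_le ?_ ?_)
    · refine (Polynomial.degree_sum_le _ _).trans (Finset.sup_le fun k _ => ?_)
      calc (M i k * A k j).degree ≤ (A k j).degree := by
            rw [hMC]
            refine (Polynomial.degree_mul_le _ _).trans ?_
            simpa using add_le_add_left Polynomial.degree_C_le (A k j).degree
        _ ≤ (cb j : WithBot ℕ) := hAcol j k
        _ ≤ _ := by exact_mod_cast le_max_right (rb i) (cb j)
    · refine (Polynomial.degree_sum_le _ _).trans (Finset.sup_le fun k _ => ?_)
      calc (A i k * M k j).degree ≤ (A i k).degree := by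
            rw [hMC]
            refine (Polynomial.degree_mul_le _ _).trans ?_
            simpa using add_le_add_right Polynomial.degree_C_le (A i k).degree
        _ ≤ (rb i : WithBot ℕ) := hArow i k
        _ ≤ _ := by exact_mod_cast le_max_left (rb i) (cb j)
  -- degree bounds for Xm
  have hXdeg : ∀ (i j : Fin (n+2)) (k : ℕ),
      (B i j).degree ≤ ((k+1 : ℕ) : WithBot ℕ) → (Xm i j).degree ≤ (k : WithBot ℕ) := by
    intro i j k h
    exact deg_div_aux (B i j) a k h
  have hMrd : Mrd n d Xm := by
    refine ⟨?_, ?_, ?_, ?_⟩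
    · refine hXdeg 0 0 d ((hBdeg 0 0).trans (Nat.cast_le.mpr ?_))
      simp [hrb, hcb]
    · intro j
      have hj : (Fin.succ j : Fin (n+2)) ≠ 0 := Fin.succ_ne_zero j
      refine hXdeg 0 j.succ (d+1) ((hBdeg 0 j.succ).trans (Nat.cast_le.mpr ?_))
      simp [hrb, hcb, hj]
    · intro i
      have hi : (Fin.succ i : Fin (n+2)) ≠ 0 := Fin.succ_ne_zero i
      refine hXdeg i.succ 0 (d-1) ((hBdeg i.succ 0).trans (Nat.cast_le.mpr ?_))
      simp only [hrb, hcb, hi, if_false, if_pos rfl, max_self]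
      omega
    · intro i j
      have hi : (Fin.succ i : Fin (n+2)) ≠ 0 := Fin.succ_ne_zero i
      have hj : (Fin.succ j : Fin (n+2)) ≠ 0 := Fin.succ_ne_zero j
      refine hXdeg i.succ j.succ d ((hBdeg i.succ j.succ).trans (Nat.cast_le.mpr ?_))
      simp [hrb, hcb, hi, hj]
  refine ⟨Xm, heq, hMrd, ?_⟩
  intro Y hY
  have h2 : (Polynomial.X - Polynomial.C a) • Y = (Polynomial.X - Polynomial.C a) • Xm :=
    hY.trans heq.symm
  apply Matrix.ext
  intro i j
  have := congrFun (congrFun h2 i) j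
  simp only [Matrix.smul_apply, smul_eq_mul] at this
  exact mul_left_cancel₀ (Polynomial.X_sub_C_ne_zero a) this
end
end

section
/- Let A(x) ∈ M_r(ℂ[x]), g(x) ∈ G_r, a ∈ ℂ and p ≥ 1 an integer, and set B(x) = g(x)⁻¹A(x)g(x) (which has entries in ℂ[x]). Then there exist e₀, e₁ ∈ ℂ^{r−1} and E_B ∈ M_{r−1}(ℂ) such that, with E(x) = [[0, ᵗe₁x + ᵗe₀],[0, E_B]], the following identity of polynomial matrices holds: [B(a)^p, B(x)] − g(x)⁻¹[A(a)^p, A(x)]g(x) = (x−a)·[E(x), B(x)], where [M, N] = MN − NM. (This expresses that the Lax vector field Υ_a^{(p)}(A) = (x−a)⁻¹[A(a)^p, A(x)] descends to the quotient by the G_r-action.) -/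
open Polynomial Matrix

noncomputable section

private lemma conjPowAux {m : ℕ} (u v M : Matrix (Fin m) (Fin m) ℂ)
    (huv : u * v = 1) (p : ℕ) : (v * M * u) ^ p = v * M ^ p * u := by
  have hvu : v * u = 1 := mul_eq_one_comm.mp huv
  have hc : ∀ X : Matrix (Fin m) (Fin m) ℂ, u * (v * X) = X := fun X => by
    rw [← Matrix.mul_assoc, huv, Matrix.one_mul]
  induction p with
  | zero => simp [hvu]
  | succ p ih =>
    rw [pow_succ, pow_succ, ih]
    simp only [Matrix.mul_assoc, hc]

private lemma deg_quot {q : Polynomial ℂ} {a : ℂ} {m : ℕ}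
    (hd : ((X - C a) * q).degree ≤ ((m + 1 : ℕ) : WithBot ℕ)) : q.degree ≤ (m : WithBot ℕ) := by
  rcases eq_or_ne q 0 with rfl | h
  · simp
  · rw [degree_mul, degree_X_sub_C, degree_eq_natDegree h] at hd
    rw [degree_eq_natDegree h]
    have : (1 + q.natDegree : ℕ) ≤ m + 1 := by exact_mod_cast hd
    exact_mod_cast by omega

private lemma quot_zero {q : Polynomial ℂ} {a : ℂ}
    (hd : ((X - C a) * q).degree ≤ ((0 : ℕ) : WithBot ℕ)) : q = 0 := by
  by_contra h
  rw [degree_mul, degree_X_sub_C, degree_eq_natDegree h] at hd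
  have : (1 + q.natDegree : ℕ) ≤ 0 := by exact_mod_cast hd
  omega

private lemma map_eval_mul {m : ℕ} (a : ℂ) (M N : Matrix (Fin m) (Fin m) (Polynomial ℂ)) :
    (M * N).map (eval a) = M.map (eval a) * N.map (eval a) := by
  ext i j
  simp [Matrix.mul_apply, Matrix.map_apply, eval_finset_sum]


/-- the Lax vector field descends to the quotient by the `G_r`-action:
for `B(x) = g(x)⁻¹A(x)g(x)` there are `e₀, e₁ ∈ ℂ^{r−1}` and `E_B ∈ M_{r−1}(ℂ)` with
`[B(a)^p, B(x)] − g(x)⁻¹[A(a)^p, A(x)]g(x) = (x−a)·[E(x), B(x)]` where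
`E(x) = [[0, ᵗe₁x + ᵗe₀],[0, E_B]]`. -/
theorem stmt14 (n : ℕ)
    (A : Matrix (Fin (n+2)) (Fin (n+2)) (Polynomial ℂ))
    (g : Matrix (Fin (n+2)) (Fin (n+2)) (Polynomial ℂ)) (hg : Gr n g)
    (a : ℂ) (p : ℕ) (hp : 1 ≤ p) :
    ∃ (e0 e1 : Fin (n+1) → ℂ) (EB : Matrix (Fin (n+1)) (Fin (n+1)) ℂ),
      let B : Matrix (Fin (n+2)) (Fin (n+2)) (Polynomial ℂ) := g⁻¹ * A * g
      let Aap : Matrix (Fin (n+2)) (Fin (n+2)) (Polynomial ℂ) :=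
        (A.map (eval a) ^ p).map Polynomial.C
      let Bap : Matrix (Fin (n+2)) (Fin (n+2)) (Polynomial ℂ) :=
        (B.map (eval a) ^ p).map Polynomial.C
      let E : Matrix (Fin (n+2)) (Fin (n+2)) (Polynomial ℂ) :=
        Matrix.of (Fin.cons
          (Fin.cons 0 fun j => Polynomial.C (e1 j) * Polynomial.X + Polynomial.C (e0 j))
          (fun _i => Fin.cons 0 fun j => Polynomial.C (EB _i j)))
      (Bap * B - B * Bap) - g⁻¹ * (Aap * A - A * Aap) * g =
        (Polynomial.X - Polynomial.C a) • (E * B - B * E) := by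
  obtain ⟨hg00, hgcol, hgrow, hgblk, hgdet⟩ := hg
  -- ## the inverse h of g
  set G : Matrix (Fin (n+1)) (Fin (n+1)) ℂ :=
    Matrix.of fun i j => (g i.succ j.succ).coeff 0 with hGdef
  have hgsucc : ∀ i j, g i.succ j.succ = C (G i j) := fun i j =>
    eq_C_of_degree_le_zero (hgblk i j)
  have hdet : g.det = C G.det := by
    rw [Matrix.det_succ_column_zero, Fin.sum_univ_succ]
    simp only [hgcol, mul_zero, zero_mul, Finset.sum_const_zero, add_zero,
      hg00, Fin.val_zero, pow_zero, one_mul, mul_one, Fin.succAbove_zero]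
    rw [show g.submatrix Fin.succ Fin.succ = G.map C by ext i j; simp [hgsucc, Matrix.map_apply]]
    exact (RingHom.map_det (C : ℂ →+* ℂ[X]) G).symm
  have hGunit : IsUnit G.det := Polynomial.isUnit_C.mp (hdet ▸ hgdet)
  have hGG : G * G⁻¹ = 1 := Matrix.mul_nonsing_inv G hGunit
  set h : Matrix (Fin (n+2)) (Fin (n+2)) (Polynomial ℂ) :=
    Matrix.of (Fin.cons
      (Fin.cons 1 fun j => -∑ k, g 0 k.succ * C (G⁻¹ k j))
      (fun i => Fin.cons 0 fun j => C (G⁻¹ i j))) with hhdef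
  have hh00 : h 0 0 = 1 := rfl
  have hh0s : ∀ j, h 0 j.succ = -∑ k, g 0 k.succ * C (G⁻¹ k j) := by
    intro j; simp [hhdef]
  have hhs0 : ∀ i : Fin (n+1), h i.succ 0 = 0 := by intro i; simp [hhdef]
  have hhss : ∀ i j : Fin (n+1), h i.succ j.succ = C (G⁻¹ i j) := by intro i j; simp [hhdef]
  have hgh : g * h = 1 := by
    ext i j
    rw [Matrix.mul_apply, Fin.sum_univ_succ]
    rcases Fin.eq_zero_or_eq_succ i with rfl | ⟨i', rfl⟩ <;>
      rcases Fin.eq_zero_or_eq_succ j with rfl | ⟨j', rfl⟩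
    · simp [hh00, hhs0, hg00, Matrix.one_apply]
    · simp only [hh0s, hhss, hg00, one_mul]
      simp [Matrix.one_apply, (Fin.succ_ne_zero j').symm]
    · simp [hhs0, hh00, hgcol, Matrix.one_apply, Fin.succ_ne_zero]
    · rw [hgcol, zero_mul, zero_add]
      have : ∑ k : Fin (n+1), g i'.succ k.succ * h k.succ j'.succ = C ((G * G⁻¹) i' j') := by
        rw [Matrix.mul_apply, map_sum]
        exact Finset.sum_congr rfl fun k _ => by rw [hgsucc, hhss, ← C_mul]
      rw [this, hGG]
      simp [Matrix.one_apply, Fin.succ_inj, apply_ite]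
  have hginv : g⁻¹ = h := Matrix.inv_eq_right_inv hgh
  -- ## degree bounds
  have hhdeg0 : ∀ k, (h 0 k).degree ≤ 1 := by
    intro k
    rcases Fin.eq_zero_or_eq_succ k with rfl | ⟨k', rfl⟩
    · rw [hh00]; exact degree_one_le.trans (by norm_num)
    · rw [hh0s, degree_neg]
      refine (degree_sum_le _ _).trans (Finset.sup_le fun k _ => ?_)
      refine (degree_mul_le _ _).trans ?_
      calc (g 0 k.succ).degree + (C (G⁻¹ k k')).degree ≤ 1 + 0 :=
            add_le_add (hgrow k) degree_C_le
        _ = 1 := by norm_num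
  have hhdegs : ∀ (i : Fin (n+1)) k, (h i.succ k).degree ≤ 0 := by
    intro i k
    rcases Fin.eq_zero_or_eq_succ k with rfl | ⟨k', rfl⟩
    · rw [hhs0]; simp
    · rw [hhss]; exact degree_C_le
  have hgdeg : ∀ l (j : Fin (n+2)), (g l j).degree ≤ ((if j = 0 then 0 else 1 : ℕ) : WithBot ℕ) := by
    intro l j
    rcases Fin.eq_zero_or_eq_succ j with rfl | ⟨j', rfl⟩
    · simp only [if_pos rfl, Nat.cast_zero]
      rcases Fin.eq_zero_or_eq_succ l with rfl | ⟨l', rfl⟩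
      · rw [hg00]; exact degree_one_le
      · rw [hgcol]; simp
    · simp only [if_neg (Fin.succ_ne_zero j'), Nat.cast_one]
      rcases Fin.eq_zero_or_eq_succ l with rfl | ⟨l', rfl⟩
      · exact hgrow j'
      · exact (hgblk l' j').trans (by norm_num)
  have hhdeg : ∀ (i : Fin (n+2)) k, (h i k).degree ≤ ((if i = 0 then 1 else 0 : ℕ) : WithBot ℕ) := by
    intro i k
    rcases Fin.eq_zero_or_eq_succ i with rfl | ⟨i', rfl⟩
    · simpa using hhdeg0 k
    · simpa [Fin.succ_ne_zero] using hhdegs i' k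
  -- ## the matrices
  set Aap : Matrix (Fin (n+2)) (Fin (n+2)) (Polynomial ℂ) :=
    (A.map (eval a) ^ p).map C with hAapdef
  set B' : Matrix (Fin (n+2)) (Fin (n+2)) (Polynomial ℂ) := h * A * g with hB'def
  set Bap : Matrix (Fin (n+2)) (Fin (n+2)) (Polynomial ℂ) :=
    (B'.map (eval a) ^ p).map C with hBapdef
  set Cm : Matrix (Fin (n+2)) (Fin (n+2)) (Polynomial ℂ) := h * Aap * g with hCmdef
  set F : Matrix (Fin (n+2)) (Fin (n+2)) (Polynomial ℂ) := Bap - Cm with hFdef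
  -- F vanishes at a
  have hevgh : g.map (eval a) * h.map (eval a) = 1 := by
    rw [← map_eval_mul, hgh]
    ext i j
    simp [Matrix.map_apply, Matrix.one_apply, apply_ite]
  have hFa : ∀ i j, (F i j).eval a = 0 := by
    have h2 : Aap.map (eval a) = A.map (eval a) ^ p := by
      ext i j; simp [hAapdef, Matrix.map_apply]
    have h1 : Bap.map (eval a) = h.map (eval a) * A.map (eval a) ^ p * g.map (eval a) := by
      have : Bap.map (eval a) = B'.map (eval a) ^ p := by
        ext i j; simp [hBapdef, Matrix.map_apply]
      rw [this, hB'def, map_eval_mul, map_eval_mul]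
      exact conjPowAux _ _ _ hevgh p
    have h3 : Cm.map (eval a) = h.map (eval a) * A.map (eval a) ^ p * g.map (eval a) := by
      rw [hCmdef, map_eval_mul, map_eval_mul, h2]
    intro i j
    have e1 : eval a (Bap i j) =
        (h.map (eval a) * A.map (eval a) ^ p * g.map (eval a)) i j := by rw [← h1]; rfl
    have e2 : eval a (Cm i j) =
        (h.map (eval a) * A.map (eval a) ^ p * g.map (eval a)) i j := by rw [← h3]; rfl
    rw [hFdef, Matrix.sub_apply, eval_sub, e1, e2, sub_self]
  -- degree bound on F
  have hFdeg : ∀ i j, (F i j).degree ≤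
      (((if i = 0 then 1 else 0) + (if j = 0 then 0 else 1) : ℕ) : WithBot ℕ) := by
    intro i j
    have h0 : (0 : WithBot ℕ) ≤ ((if i = 0 then 1 else 0) + (if j = 0 then 0 else 1) : ℕ) := by
      exact_mod_cast Nat.zero_le _
    have hB : (Bap i j).degree ≤ 0 := by
      rw [hBapdef]; exact degree_C_le
    have hC : (Cm i j).degree ≤
        (((if i = 0 then 1 else 0) + (if j = 0 then 0 else 1) : ℕ) : WithBot ℕ) := by
      rw [hCmdef, Matrix.mul_apply]
      refine (degree_sum_le _ _).trans (Finset.sup_le fun l _ => ?_)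
      refine (degree_mul_le _ _).trans ?_
      have hhA : ((h * Aap) i l).degree ≤ ((if i = 0 then 1 else 0 : ℕ) : WithBot ℕ) := by
        rw [Matrix.mul_apply]
        refine (degree_sum_le _ _).trans (Finset.sup_le fun k _ => ?_)
        refine (degree_mul_le _ _).trans ?_
        have h2 : (Aap k l).degree ≤ 0 := by rw [hAapdef]; exact degree_C_le
        calc (h i k).degree + (Aap k l).degree ≤
              ((if i = 0 then 1 else 0 : ℕ) : WithBot ℕ) + 0 := add_le_add (hhdeg i k) h2
          _ = _ := add_zero _
      rw [Nat.cast_add]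
      exact add_le_add hhA (hgdeg l j)
    have : (F i j).degree ≤ max (Bap i j).degree (Cm i j).degree := by
      rw [hFdef]; exact degree_sub_le _ _
    exact this.trans (max_le (hB.trans h0) hC)
  -- ## division by X - a
  set E' : Matrix (Fin (n+2)) (Fin (n+2)) (Polynomial ℂ) :=
    Matrix.of fun i j => F i j /ₘ (X - C a) with hE'def
  have hFE : ∀ i j, (X - C a) * E' i j = F i j := by
    intro i j
    exact mul_divByMonic_eq_iff_isRoot.mpr (hFa i j)
  have hE's0 : ∀ i : Fin (n+1), E' i.succ 0 = 0 := by
    intro i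
    refine quot_zero (a := a) ?_
    rw [hFE]
    simpa [Fin.succ_ne_zero] using hFdeg i.succ 0
  have hE'00 : (E' 0 0).degree ≤ ((0 : ℕ) : WithBot ℕ) := by
    refine deg_quot (a := a) ?_
    rw [hFE]
    simpa using hFdeg 0 0
  have hE'0s : ∀ j : Fin (n+1), (E' 0 j.succ).degree ≤ ((1 : ℕ) : WithBot ℕ) := by
    intro j
    refine deg_quot (a := a) ?_
    rw [hFE]
    simpa [Fin.succ_ne_zero] using hFdeg 0 j.succ
  have hE'ss : ∀ i j : Fin (n+1), (E' i.succ j.succ).degree ≤ ((0 : ℕ) : WithBot ℕ) := by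
    intro i j
    refine deg_quot (a := a) ?_
    rw [hFE]
    simpa [Fin.succ_ne_zero] using hFdeg i.succ j.succ
  set c : ℂ := (E' 0 0).coeff 0 with hcdef
  -- ## the witnesses
  refine ⟨fun j => (E' 0 j.succ).coeff 0, fun j => (E' 0 j.succ).coeff 1,
    Matrix.of fun i j => (E' i.succ j.succ).coeff 0 - if i = j then c else 0, ?_⟩
  dsimp only
  rw [hginv, ← hB'def, ← hBapdef]
  -- E relation
  have hEeq : (Matrix.of (Fin.cons
        (Fin.cons 0 fun j => C ((E' 0 j.succ).coeff 1) * X + C ((E' 0 j.succ).coeff 0))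
        (fun i => Fin.cons 0 fun j =>
          C ((E' i.succ j.succ).coeff 0 - if i = j then c else 0)))
      : Matrix (Fin (n+2)) (Fin (n+2)) (Polynomial ℂ)) = E' - (C c) • 1 := by
    ext i j
    rcases Fin.eq_zero_or_eq_succ i with rfl | ⟨i', rfl⟩ <;>
      rcases Fin.eq_zero_or_eq_succ j with rfl | ⟨j', rfl⟩
    · have := eq_C_of_degree_le_zero (by exact_mod_cast hE'00)
      have hc' : E' 0 0 = C c := this
      simp [Matrix.one_apply, hc']
    · have := eq_X_add_C_of_degree_le_one (p := E' 0 j'.succ) (by exact_mod_cast hE'0s j')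
      simp [Matrix.one_apply, (Fin.succ_ne_zero j').symm, ← this]
    · simp [Matrix.one_apply, Fin.succ_ne_zero, hE's0]
    · have := eq_C_of_degree_le_zero (by exact_mod_cast hE'ss i' j')
      simp only [Matrix.of_apply, Fin.cons_succ, Matrix.sub_apply, Matrix.smul_apply,
        Matrix.one_apply, Fin.succ_inj, smul_eq_mul, mul_ite, mul_one, mul_zero]
      rw [map_sub, ← this]
      split <;> simp
  simp only [Matrix.of_apply]
  rw [hEeq]
  -- main algebra
  have hcan : ∀ X : Matrix (Fin (n+2)) (Fin (n+2)) (Polynomial ℂ), g * (h * X) = X := fun X => by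
    rw [← Matrix.mul_assoc, hgh, Matrix.one_mul]
  have hstep : h * (Aap * A - A * Aap) * g = Cm * B' - B' * Cm := by
    rw [hCmdef, hB'def]
    simp only [Matrix.mul_sub, Matrix.sub_mul, Matrix.mul_assoc, hcan]
  rw [hstep]
  have hFsmul : Bap - Cm = (X - C a) • E' := by
    ext i j
    rw [Matrix.smul_apply, smul_eq_mul, hFE i j, hFdef]
  calc Bap * B' - B' * Bap - (Cm * B' - B' * Cm)
      = (Bap - Cm) * B' - B' * (Bap - Cm) := by noncomm_ring
    _ = ((X - C a) • E') * B' - B' * ((X - C a) • E') := by rw [hFsmul]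
    _ = (X - C a) • (E' * B' - B' * E') := by
        rw [Matrix.smul_mul, Matrix.mul_smul, smul_sub]
    _ = (X - C a) • ((E' - C c • 1) * B' - B' * (E' - C c • 1)) := by
        refine congrArg ((X - C a) • ·) ?_
        simp only [Matrix.sub_mul, Matrix.mul_sub, Matrix.smul_mul, Matrix.mul_smul,
          Matrix.one_mul, Matrix.mul_one]
        abel
end
end

section
/- Let r ≥ 2 and fix data v_d ∈ ℂ, w_{d+1}, w_d, u_{d−2}, h ∈ ℂ^{r−1}, T_{d−1}, J ∈ M_{r−1}(ℂ) and a ∈ ℂ. Then there is at most one triple (γ, β, C) ∈ ℂ^{r−1} × ℂ^{r−1} × M_{r−1}(ℂ) satisfying the linear system: (i) C·ν = (τ − v_d·I_{r−1})·h; (ii) ν·ᵗγ − (Cτ − τC) = h·ᵗw_{d+1}; (iii) for every i with 1 ≤ i ≤ r−1, the (1,i) entry of ν·ᵗβ + u_{d−2}·ᵗγ − C·T_{d−1} equals the (1,i) entry of h·(ᵗw_d + a·ᵗw_{d+1}) + J·τ. -/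
open Matrix

noncomputable section

lemma mul_tau_apply (n : ℕ) (D : Matrix (Fin (n+1)) (Fin (n+1)) ℂ) (i j : Fin (n+1)) :
    (D * tauMat n) i j = if h : (j:ℕ)+1 ≤ n then D i ⟨(j:ℕ)+1, Nat.lt_succ_of_le h⟩ else 0 := by
  rw [Matrix.mul_apply]
  split_ifs with h
  · rw [Finset.sum_eq_single (⟨(j:ℕ)+1, Nat.lt_succ_of_le h⟩ : Fin (n+1))]
    · simp [tauMat]
    · intro k _ hk
      simp only [tauMat, Matrix.of_apply]
      rw [if_neg fun hkj => hk (Fin.ext hkj), mul_zero]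
    · simp
  · apply Finset.sum_eq_zero
    intro k _
    simp only [tauMat, Matrix.of_apply]
    rw [if_neg, mul_zero]
    intro hkj
    have := k.isLt
    omega

lemma tau_mul_apply (n : ℕ) (D : Matrix (Fin (n+1)) (Fin (n+1)) ℂ) (i j : Fin (n+1)) :
    (tauMat n * D) i j = if h : 1 ≤ (i:ℕ) then D ⟨(i:ℕ)-1, by omega⟩ j else 0 := by
  rw [Matrix.mul_apply]
  split_ifs with h
  · rw [Finset.sum_eq_single (⟨(i:ℕ)-1, by omega⟩ : Fin (n+1))]
    · simp only [tauMat, Matrix.of_apply]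
      rw [if_pos (by omega), one_mul]
    · intro k _ hk
      simp only [tauMat, Matrix.of_apply]
      rw [if_neg, zero_mul]
      intro hik; apply hk; apply Fin.ext; simp; omega
    · simp
  · apply Finset.sum_eq_zero
    intro k _
    simp only [tauMat, Matrix.of_apply]
    rw [if_neg (by omega), zero_mul]

lemma mulVec_nu (n : ℕ) (D : Matrix (Fin (n+1)) (Fin (n+1)) ℂ) (i : Fin (n+1)) :
    (D *ᵥ nuVec n) i = D i 0 := by
  simp only [Matrix.mulVec, dotProduct, nuVec]
  rw [Finset.sum_eq_single (0 : Fin (n+1))]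
  · simp
  · intro k _ hk
    rw [if_neg (show ¬((k:ℕ) = 0) from fun h0 => hk (Fin.ext h0)), mul_zero]
  · simp

/-- the linear system (i)–(iii) determining the projection of the Lax
vector field onto `𝒮_∞` has at most one solution `(γ, β, C)`. -/
theorem stmt17 (n : ℕ) (vd : ℂ) (w1 w0 u h : Fin (n+1) → ℂ)
    (Td J : Matrix (Fin (n+1)) (Fin (n+1)) ℂ) (a : ℂ)
    (γ₁ β₁ : Fin (n+1) → ℂ) (C₁ : Matrix (Fin (n+1)) (Fin (n+1)) ℂ)
    (γ₂ β₂ : Fin (n+1) → ℂ) (C₂ : Matrix (Fin (n+1)) (Fin (n+1)) ℂ)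
    (h11 : C₁ *ᵥ nuVec n = (tauMat n - vd • (1 : Matrix (Fin (n+1)) (Fin (n+1)) ℂ)) *ᵥ h)
    (h12 : vecMulVec (nuVec n) γ₁ - (C₁ * tauMat n - tauMat n * C₁) = vecMulVec h w1)
    (h13 : ∀ i : Fin (n+1),
      (vecMulVec (nuVec n) β₁ + vecMulVec u γ₁ - C₁ * Td) 0 i =
      (vecMulVec h (fun j => w0 j + a * w1 j) + J * tauMat n) 0 i)
    (h21 : C₂ *ᵥ nuVec n = (tauMat n - vd • (1 : Matrix (Fin (n+1)) (Fin (n+1)) ℂ)) *ᵥ h)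
    (h22 : vecMulVec (nuVec n) γ₂ - (C₂ * tauMat n - tauMat n * C₂) = vecMulVec h w1)
    (h23 : ∀ i : Fin (n+1),
      (vecMulVec (nuVec n) β₂ + vecMulVec u γ₂ - C₂ * Td) 0 i =
      (vecMulVec h (fun j => w0 j + a * w1 j) + J * tauMat n) 0 i) :
    γ₁ = γ₂ ∧ β₁ = β₂ ∧ C₁ = C₂ := by
  set D := C₁ - C₂ with hDdef
  -- first column of D is zero
  have hcol : ∀ i : Fin (n+1), D i 0 = 0 := by
    intro i
    have e : (C₁ *ᵥ nuVec n) i = (C₂ *ᵥ nuVec n) i := by rw [h11, h21]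
    rw [mulVec_nu, mulVec_nu] at e
    simp [hDdef, Matrix.sub_apply, e]
  -- commutator relation off the top row
  have hB : ∀ i j : Fin (n+1), 1 ≤ (i:ℕ) →
      (D * tauMat n) i j = (tauMat n * D) i j := by
    intro i j hi
    have e := congrFun (congrFun (h12.trans h22.symm) i) j
    simp only [Matrix.sub_apply, Matrix.vecMulVec_apply, nuVec] at e
    rw [if_neg (by omega)] at e
    have e2 : (tauMat n * C₁) i j - (C₁ * tauMat n) i j
        = (tauMat n * C₂) i j - (C₂ * tauMat n) i j := by simpa using e
    simp only [hDdef, Matrix.sub_mul, Matrix.mul_sub, Matrix.sub_apply]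
    linear_combination -e2
  -- shift recurrence
  have hstep : ∀ (i j : Fin (n+1)), (hi : (i:ℕ) < n) → (hj : (j:ℕ) < n) →
      D ⟨(i:ℕ)+1, by omega⟩ ⟨(j:ℕ)+1, by omega⟩ = D i j := by
    intro i j hi hj
    have key := hB ⟨(i:ℕ)+1, by omega⟩ j (show 1 ≤ (i:ℕ)+1 by omega)
    rw [mul_tau_apply, tau_mul_apply, dif_pos (show (j:ℕ)+1 ≤ n by omega),
      dif_pos (show 1 ≤ (i:ℕ)+1 by omega)] at key
    exact key
  -- edge vanishing
  have hedge : ∀ i : Fin (n+1), (i:ℕ) < n → D i ⟨n, by omega⟩ = 0 := by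
    intro i hi
    have key := hB ⟨(i:ℕ)+1, by omega⟩ ⟨n, by omega⟩ (show 1 ≤ (i:ℕ)+1 by omega)
    rw [mul_tau_apply, tau_mul_apply, dif_neg (show ¬((n:ℕ)+1 ≤ n) by omega),
      dif_pos (show 1 ≤ (i:ℕ)+1 by omega)] at key
    rw [show i = (⟨(i:ℕ)+1-1, by omega⟩ : Fin (n+1)) from Fin.ext (show (i:ℕ) = (i:ℕ)+1-1 by omega)]
    exact key.symm
  -- lower-triangular part vanishes
  have hlow : ∀ k : ℕ, ∀ i j : Fin (n+1), (j:ℕ) = k → (j:ℕ) ≤ (i:ℕ) → D i j = 0 := by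
    intro k
    induction k with
    | zero =>
      intro i j hj _
      rw [show j = 0 from Fin.ext hj]
      exact hcol i
    | succ k ih =>
      intro i j hj hji
      have hi := i.isLt
      have hjl := j.isLt
      have key := hstep ⟨(i:ℕ)-1, by omega⟩ ⟨(j:ℕ)-1, by omega⟩
        (show (i:ℕ)-1 < n by omega) (show (j:ℕ)-1 < n by omega)
      rw [show (⟨((⟨(i:ℕ)-1, by omega⟩ : Fin (n+1)):ℕ)+1, show (i:ℕ)-1+1 < n+1 by omega⟩ : Fin (n+1)) = i
          from Fin.ext (show (i:ℕ)-1+1 = (i:ℕ) by omega),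
        show (⟨((⟨(j:ℕ)-1, by omega⟩ : Fin (n+1)):ℕ)+1, show (j:ℕ)-1+1 < n+1 by omega⟩ : Fin (n+1)) = j
          from Fin.ext (show (j:ℕ)-1+1 = (j:ℕ) by omega)] at key
      rw [key]
      exact ih _ _ (show (j:ℕ)-1 = k by omega) (show (j:ℕ)-1 ≤ (i:ℕ)-1 by omega)
  -- strictly upper part vanishes
  have hupp : ∀ m : ℕ, ∀ i j : Fin (n+1), (i:ℕ) < (j:ℕ) → n - (j:ℕ) = m → D i j = 0 := by
    intro m
    induction m with
    | zero =>
      intro i j hij hm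
      have hj : (j:ℕ) = n := by have := j.isLt; omega
      rw [show j = ⟨n, by omega⟩ from Fin.ext hj]
      exact hedge i (by omega)
    | succ m ih =>
      intro i j hij hm
      have hjn : (j:ℕ) < n := by omega
      rw [← hstep i j (by omega) hjn]
      exact ih _ _ (show (i:ℕ)+1 < (j:ℕ)+1 by omega) (show n - ((j:ℕ)+1) = m by omega)
  have hD0 : ∀ i j : Fin (n+1), D i j = 0 := by
    intro i j
    rcases lt_or_ge (i:ℕ) (j:ℕ) with hc | hc
    · exact hupp _ i j hc rfl
    · exact hlow _ i j rfl hc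
  have HC : C₁ = C₂ := by
    ext i j
    have := hD0 i j
    simp only [hDdef, Matrix.sub_apply] at this
    exact sub_eq_zero.mp this
  have Hγ : γ₁ = γ₂ := by
    funext i
    have e := congrFun (congrFun (h12.trans h22.symm) 0) i
    simp [Matrix.sub_apply, Matrix.vecMulVec_apply, nuVec, HC] at e
    exact e
  have Hβ : β₁ = β₂ := by
    funext i
    have e := (h13 i).trans (h23 i).symm
    simp [Matrix.add_apply, Matrix.sub_apply, Matrix.vecMulVec_apply, nuVec, HC, Hγ] at e
    exact e
  exact ⟨Hγ, Hβ, HC⟩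
end
end

section
/- Let n ≥ 2 be an integer, T ∈ M_n(ℂ) and u ∈ ℂ^n. Suppose that the vectors u, Tu, …, T^{n−2}u are linearly independent and that det(u, Tu, …, T^{n−1}u) = 0 (determinant of the n×n matrix with these columns). Then there exists a unique α ∈ ℂ such that for every ν ∈ ℂ^n with det(ν, u, Tu, …, T^{n−2}u) ≠ 0 one has det(Tν, u, Tu, …, T^{n−2}u) = α · det(ν, u, Tu, …, T^{n−2}u); moreover this α is an eigenvalue of T. (With n = r−1, this shows that the quantity y_i in the separation-of-variables formula y_i = det(Tν, u, …, T^{r−3}u)/det(ν, u, …, T^{r−3}u) is independent of the choice of ν and is an eigenvalue of T.) -/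
open Matrix

noncomputable section

/-- The `n×n` matrix (`n = m+2`) with columns `ν, u, Tu, …, T^{n−2}u`. -/
def colM (m : ℕ) (T : Matrix (Fin (m+2)) (Fin (m+2)) ℂ) (u ν : Fin (m+2) → ℂ) :
    Matrix (Fin (m+2)) (Fin (m+2)) ℂ :=
  Matrix.of fun i j =>
    (Fin.cons ν (fun k : Fin (m+1) => (T ^ (k : ℕ)) *ᵥ u) : Fin (m+2) → Fin (m+2) → ℂ) j i

/-- `detF m T u` is `ν ↦ det(colM m T u ν)` as a linear map. -/
def detF (m : ℕ) (T : Matrix (Fin (m+2)) (Fin (m+2)) ℂ) (u : Fin (m+2) → ℂ) :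
    (Fin (m+2) → ℂ) →ₗ[ℂ] ℂ :=
  (Matrix.detRowAlternating (R := ℂ) (n := Fin (m+2))).toMultilinearMap.toLinearMap
    (Fin.cons 0 fun k : Fin (m+1) => (T ^ (k : ℕ)) *ᵥ u) 0

lemma detF_apply (m : ℕ) (T : Matrix (Fin (m+2)) (Fin (m+2)) ℂ) (u ν : Fin (m+2) → ℂ) :
    detF m T u ν = (colM m T u ν).det := by
  have h : colM m T u ν
      = (Matrix.of (Fin.cons ν fun k : Fin (m+1) => (T ^ (k : ℕ)) *ᵥ u))ᵀ := rfl
  rw [h, Matrix.det_transpose]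
  show Matrix.detRowAlternating
      (Function.update (Fin.cons 0 fun k : Fin (m+1) => (T ^ (k : ℕ)) *ᵥ u) 0 ν) = _
  rw [Fin.update_cons_zero]
  rfl

lemma det_ne_zero_of_li {n : ℕ} {v : Fin n → Fin n → ℂ} (h : LinearIndependent ℂ v) :
    (Matrix.of v).det ≠ 0 := by
  have : IsUnit (Matrix.of v) := Matrix.linearIndependent_rows_iff_isUnit.mp h
  have := (Matrix.isUnit_iff_isUnit_det _).mp this
  exact this.ne_zero

lemma det_eq_zero_of_not_li {n : ℕ} {v : Fin n → Fin n → ℂ} (h : ¬ LinearIndependent ℂ v) :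
    (Matrix.of v).det = 0 := by
  by_contra hd
  exact h (Matrix.linearIndependent_rows_iff_isUnit.mpr
    ((Matrix.isUnit_iff_isUnit_det _).mpr (isUnit_iff_ne_zero.mpr hd)))

/-- separation of variables. If `u, Tu, …, T^{n−2}u` are linearly
independent and `det(u, Tu, …, T^{n−1}u) = 0`, then there is a unique `α ∈ ℂ` such that
`det(Tν, u, …, T^{n−2}u) = α·det(ν, u, …, T^{n−2}u)` for every `ν` with
`det(ν, u, …, T^{n−2}u) ≠ 0`; moreover `α` is an eigenvalue of `T`. -/
theorem stmt18 (m : ℕ) (T : Matrix (Fin (m+2)) (Fin (m+2)) ℂ) (u : Fin (m+2) → ℂ)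
    (hind : LinearIndependent ℂ (fun k : Fin (m+1) => (T ^ (k : ℕ)) *ᵥ u))
    (hdet : (Matrix.of fun i j : Fin (m+2) => ((T ^ (j : ℕ)) *ᵥ u) i).det = 0) :
    ∃ α : ℂ,
      (∀ ν : Fin (m+2) → ℂ, (colM m T u ν).det ≠ 0 →
        (colM m T u (T *ᵥ ν)).det = α * (colM m T u ν).det) ∧
      (∃ w : Fin (m+2) → ℂ, w ≠ 0 ∧ T *ᵥ w = α • w) ∧
      (∀ α' : ℂ,
        (∀ ν : Fin (m+2) → ℂ, (colM m T u ν).det ≠ 0 →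
          (colM m T u (T *ᵥ ν)).det = α' * (colM m T u ν).det) → α' = α) := by
  classical
  set vs : Fin (m+1) → Fin (m+2) → ℂ := fun k => (T ^ (k : ℕ)) *ᵥ u with hvs
  set W := Submodule.span ℂ (Set.range vs) with hW
  set f := detF m T u with hf
  -- f vanishes exactly off W (for independent extension), and W is T-invariant.
  have hcons : ∀ x : Fin (m+2) → ℂ, x ∉ W → f x ≠ 0 := by
    intro x hx
    have hli : LinearIndependent ℂ (Fin.cons x vs : Fin (m+2) → Fin (m+2) → ℂ) :=
      linearIndependent_fin_cons.mpr ⟨hind, hx⟩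
    rw [hf, detF_apply]
    have : colM m T u x = (Matrix.of (Fin.cons x vs : Fin (m+2) → Fin (m+2) → ℂ))ᵀ := rfl
    rw [this, Matrix.det_transpose]
    exact det_ne_zero_of_li hli
  have hmem : ∀ x : Fin (m+2) → ℂ, x ∈ W → f x = 0 := by
    intro x hx
    have hnli : ¬ LinearIndependent ℂ (Fin.cons x vs : Fin (m+2) → Fin (m+2) → ℂ) := by
      intro h
      exact (linearIndependent_fin_cons.mp h).2 hx
    rw [hf, detF_apply]
    have : colM m T u x = (Matrix.of (Fin.cons x vs : Fin (m+2) → Fin (m+2) → ℂ))ᵀ := rfl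
    rw [this, Matrix.det_transpose]
    exact det_eq_zero_of_not_li hnli
  -- T^(m+1) u ∈ W
  have hlast : (T ^ (m+1)) *ᵥ u ∈ W := by
    by_contra h
    have hli : LinearIndependent ℂ (Fin.snoc vs ((T ^ (m+1)) *ᵥ u) : Fin (m+2) → Fin (m+2) → ℂ) :=
      linearIndependent_fin_snoc.mpr ⟨hind, h⟩
    have heq : (fun j : Fin (m+2) => (T ^ (j : ℕ)) *ᵥ u)
        = (Fin.snoc vs ((T ^ (m+1)) *ᵥ u) : Fin (m+2) → Fin (m+2) → ℂ) := by
      funext j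
      refine Fin.lastCases ?_ ?_ j
      · simp [Fin.snoc_last]
      · intro i; simp [Fin.snoc_castSucc, hvs]
    have hli' : LinearIndependent ℂ
        (fun j : Fin (m+2) => ((Matrix.of fun i j : Fin (m+2) => ((T ^ (j : ℕ)) *ᵥ u) i)ᵀ) j) := by
      rw [show (fun j : Fin (m+2) => ((Matrix.of fun i j : Fin (m+2) => ((T ^ (j : ℕ)) *ᵥ u) i)ᵀ) j)
          = fun j : Fin (m+2) => (T ^ (j : ℕ)) *ᵥ u from rfl, heq]
      exact hli
    have := Matrix.linearIndependent_cols_iff_isUnit.mp hli'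
    exact ((Matrix.isUnit_iff_isUnit_det _).mp this).ne_zero hdet
  -- W is T-invariant
  have hinv : ∀ x ∈ W, T *ᵥ x ∈ W := by
    intro x hx
    have : W ≤ Submodule.comap (Matrix.mulVecLin T) W := by
      rw [hW, Submodule.span_le]
      rintro _ ⟨k, rfl⟩
      simp only [Set.mem_preimage, SetLike.mem_coe, Submodule.mem_comap, Matrix.mulVecLin_apply]
      have : T *ᵥ vs k = (T ^ ((k : ℕ) + 1)) *ᵥ u := by
        rw [hvs, pow_succ', Matrix.mulVec_mulVec]
      rw [this]
      rcases lt_or_eq_of_le (Nat.lt_succ_iff.mp k.isLt) with hk | hk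
      · exact Submodule.subset_span ⟨⟨(k : ℕ) + 1, Nat.succ_lt_succ hk⟩, rfl⟩
      · rw [hk]; exact hlast
    exact this hx
  -- pick ν₀ ∉ W
  have hWne : W ≠ ⊤ := by
    intro h
    have hb : Module.finrank ℂ (Fin (m+2) → ℂ) = m + 1 := by
      have : Nonempty (Module.Basis (Fin (m+1)) ℂ (Fin (m+2) → ℂ)) :=
        ⟨Module.Basis.mk hind (by rw [← hW, h])⟩
      rw [Module.finrank_eq_card_basis this.some]
      simp
    rw [Module.finrank_fin_fun] at hb
    omega
  obtain ⟨ν₀, -, hν₀⟩ := SetLike.exists_of_lt (lt_top_iff_ne_top.mpr hWne : W < ⊤)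
  have hfν₀ : f ν₀ ≠ 0 := hcons ν₀ hν₀
  set α : ℂ := f (T *ᵥ ν₀) / f ν₀ with hα
  -- main identity for all ν
  have key : ∀ ν : Fin (m+2) → ℂ, f (T *ᵥ ν) = α * f ν := by
    intro ν
    set c : ℂ := f ν / f ν₀ with hc
    have h1 : f (ν - c • ν₀) = 0 := by
      rw [map_sub, LinearMap.map_smul, smul_eq_mul, hc, div_mul_cancel₀ _ hfν₀, sub_self]
    have h2 : ν - c • ν₀ ∈ W := by
      by_contra h
      exact hcons _ h h1
    have h3 : f (T *ᵥ (ν - c • ν₀)) = 0 := hmem _ (hinv _ h2)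
    rw [Matrix.mulVec_sub, Matrix.mulVec_smul, map_sub, LinearMap.map_smul, smul_eq_mul, sub_eq_zero] at h3
    rw [h3, hc, hα]
    field_simp
  refine ⟨α, ?_, ?_, ?_⟩
  · intro ν _
    rw [← detF_apply, ← detF_apply, ← hf]
    exact key ν
  · -- α is an eigenvalue
    set φ : Fin (m+2) → ℂ := fun i => f (Pi.single i 1) with hφ
    have hfx : ∀ x : Fin (m+2) → ℂ, f x = ∑ i, x i * φ i := by
      intro x
      rw [LinearMap.pi_apply_eq_sum_univ f x]
      simp only [hφ, smul_eq_mul]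
      refine Finset.sum_congr rfl fun i _ => ?_
      congr 1
      congr 1
      funext j
      simp [Pi.single_apply, eq_comm]
    have hφne : φ ≠ 0 := by
      intro h
      apply hfν₀
      rw [hfx]; simp [h]
    have hTφ : Tᵀ *ᵥ φ = α • φ := by
      funext j
      have := key (Pi.single j 1)
      rw [hfx (T *ᵥ Pi.single j 1)] at this
      have hcol : T *ᵥ Pi.single j 1 = fun i => T i j := by
        funext i; simp [Matrix.mulVec_single]
      rw [hcol] at this
      have hj : f (Pi.single j 1) = φ j := rfl
      rw [hj] at this
      simpa [Matrix.mulVec, dotProduct, Matrix.transpose_apply, mul_comm] using this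
    have hdet0 : (T - α • 1).det = 0 := by
      have h1 : (Tᵀ - α • 1) *ᵥ φ = 0 := by
        rw [Matrix.sub_mulVec, hTφ, Matrix.smul_mulVec, Matrix.one_mulVec, sub_self]
      have h2 : (Tᵀ - α • 1).det = 0 :=
        Matrix.exists_mulVec_eq_zero_iff.mp ⟨φ, hφne, h1⟩
      have : (T - α • 1)ᵀ = Tᵀ - α • 1 := by
        rw [Matrix.transpose_sub, Matrix.transpose_smul, Matrix.transpose_one]
      rw [← Matrix.det_transpose, this]
      exact h2
    obtain ⟨w, hw0, hw⟩ := Matrix.exists_mulVec_eq_zero_iff.mpr hdet0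
    refine ⟨w, hw0, ?_⟩
    rw [Matrix.sub_mulVec, Matrix.smul_mulVec, Matrix.one_mulVec, sub_eq_zero] at hw
    exact hw
  · intro α' hα'
    have h := hα' ν₀ (by rw [← detF_apply, ← hf]; exact hfν₀)
    rw [← detF_apply, ← detF_apply, ← hf, key ν₀] at h
    exact mul_right_cancel₀ hfν₀ h.symm
end
end
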